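/- arXiv:2409.04840 — 8 statements merged into one kernel-verified Lean document; each statement's English description precedes it below -/
import Mathlib

section
/- Let d ≥ 1 be an integer and let Θ ⊆ ℝ^d be nonempty. Let c_1, …, c_m ∈ ℝ^d and ρ_1, …, ρ_m ≥ 0 with Σ_{i=1}^m ρ_i = 1, and set G = Σ_{i=1}^m ρ_i c_i c_iᵀ. Assume that every θ ∈ Θ lies in the range (column space) of G and satisfies θᵀ G† θ ≤ 2d, where G† is the Moore–Penrose pseudo-inverse of G. Then for every v ∈ ℝ^d, sup_{θ ∈ Θ} |⟨v, θ⟩| ≤ √(2d) · max_{1 ≤ i ≤ m} |⟨v, c_i⟩|. -/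
open Matrix

/-- **Range vs. design range (abstract core of Lemma `rangerel`, i.e. Proposition 4.5 of
Weisz et al.).**  Let `Θ ⊆ ℝ^d` be nonempty, let `c_1, …, c_m ∈ ℝ^d` and nonnegative
weights `ρ_i` summing to `1`, and let `G = ∑ i, ρ i • c_i c_iᵀ`.  Let `Gdag` be the
Moore–Penrose pseudo-inverse of `G` (characterized by the four Penrose conditions).
If every `θ ∈ Θ` lies in the column space of `G` and satisfies `θᵀ G† θ ≤ 2d`, then for
every `v ∈ ℝ^d` and every `θ ∈ Θ`, `|⟨v, θ⟩| ≤ √(2d) · max_i |⟨v, c_i⟩|`. -/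
theorem range_le_sqrt_two_d_mul_design_range {d m : ℕ} (hd : 1 ≤ d) (hm : 1 ≤ m)
    (Θ : Set (Fin d → ℝ)) (hΘ : Θ.Nonempty)
    (c : Fin m → Fin d → ℝ) (ρ : Fin m → ℝ)
    (hρ : ∀ i, 0 ≤ ρ i) (hρsum : ∑ i, ρ i = 1)
    (G Gdag : Matrix (Fin d) (Fin d) ℝ)
    (hG : G = ∑ i, ρ i • vecMulVec (c i) (c i))
    (hMP1 : G * Gdag * G = G) (hMP2 : Gdag * G * Gdag = Gdag)
    (hMP3 : (G * Gdag)ᵀ = G * Gdag) (hMP4 : (Gdag * G)ᵀ = Gdag * G)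
    (hΘrange : ∀ θ ∈ Θ, ∃ w : Fin d → ℝ, G *ᵥ w = θ)
    (hΘquad : ∀ θ ∈ Θ, θ ⬝ᵥ (Gdag *ᵥ θ) ≤ 2 * (d : ℝ))
    (v : Fin d → ℝ) :
    ∀ θ ∈ Θ, |v ⬝ᵥ θ| ≤ Real.sqrt (2 * (d : ℝ)) * ⨆ i, |v ⬝ᵥ c i| := by
  intro θ hθ
  obtain ⟨w, hw⟩ := hΘrange θ hθ
  have Gsymm : Gᵀ = G := by
    rw [hG]; ext j k
    simp only [transpose_apply, Matrix.sum_apply, Matrix.smul_apply, vecMulVec_apply,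
      smul_eq_mul]
    exact Finset.sum_congr rfl fun i _ => by ring
  -- key expansion
  have key : ∀ u x : Fin d → ℝ, u ⬝ᵥ (G *ᵥ x) = ∑ i, ρ i * ((u ⬝ᵥ c i) * (c i ⬝ᵥ x)) := by
    intro u x
    simp only [hG, Matrix.mulVec, dotProduct, Matrix.sum_apply, Matrix.smul_apply,
      Matrix.vecMulVec_apply, smul_eq_mul, Finset.mul_sum, Finset.sum_mul]
    trans ∑ j : Fin d, ∑ i : Fin m, ∑ k : Fin d, u j * (ρ i * (c i j * c i k) * x k)
    · exact Finset.sum_congr rfl fun j _ => Finset.sum_comm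
    rw [Finset.sum_comm]
    apply Finset.sum_congr rfl; intro i _
    rw [Finset.sum_comm]
    apply Finset.sum_congr rfl; intro k _
    apply Finset.sum_congr rfl; intro j _
    ring
  set a : Fin m → ℝ := fun i => v ⬝ᵥ c i with ha
  set b : Fin m → ℝ := fun i => c i ⬝ᵥ w with hb
  have hvθ : v ⬝ᵥ θ = ∑ i, ρ i * (a i * b i) := by rw [← hw]; exact key v w
  have h2 : G *ᵥ w = w ᵥ* G := by rw [← Gsymm, Matrix.mulVec_transpose, Gsymm]
  -- quadratic form rewrite
  have hθq : θ ⬝ᵥ (Gdag *ᵥ θ) = ∑ i, ρ i * (b i * b i) := by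
    have h1 : θ ⬝ᵥ (Gdag *ᵥ θ) = w ⬝ᵥ (G *ᵥ w) := by
      calc θ ⬝ᵥ (Gdag *ᵥ θ)
          = θ ⬝ᵥ ((Gdag * G) *ᵥ w) := by rw [← hw, Matrix.mulVec_mulVec]
        _ = (θ ᵥ* (Gdag * G)) ⬝ᵥ w := Matrix.dotProduct_mulVec _ _ _
        _ = ((w ᵥ* G) ᵥ* (Gdag * G)) ⬝ᵥ w := by rw [← hw, h2]
        _ = (w ᵥ* (G * (Gdag * G))) ⬝ᵥ w := by rw [Matrix.vecMul_vecMul]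
        _ = (w ᵥ* G) ⬝ᵥ w := by rw [← Matrix.mul_assoc, hMP1]
        _ = w ⬝ᵥ (G *ᵥ w) := by rw [← h2, dotProduct_comm]
    rw [h1, key w w]
    exact Finset.sum_congr rfl fun i _ => by rw [dotProduct_comm w (c i)]
  have hbsum : ∑ i, ρ i * (b i * b i) ≤ 2 * (d : ℝ) := hθq ▸ hΘquad θ hθ
  have hbsum0 : 0 ≤ ∑ i, ρ i * (b i * b i) :=
    Finset.sum_nonneg fun i _ => mul_nonneg (hρ i) (mul_self_nonneg _)
  -- the design range bound
  set M : ℝ := ⨆ i, |v ⬝ᵥ c i| with hMdef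
  have hbdd : BddAbove (Set.range fun i => |v ⬝ᵥ c i|) :=
    Set.Finite.bddAbove (Set.finite_range _)
  have hM : ∀ i, |a i| ≤ M := fun i => le_ciSup hbdd i
  have hM0 : 0 ≤ M := le_trans (abs_nonneg _) (hM ⟨0, hm⟩)
  have hasum : ∑ i, ρ i * (a i * a i) ≤ M ^ 2 := by
    calc ∑ i, ρ i * (a i * a i) ≤ ∑ i, ρ i * M ^ 2 := by
          apply Finset.sum_le_sum
          intro i _
          apply mul_le_mul_of_nonneg_left _ (hρ i)
          have h3 : a i * a i = |a i| ^ 2 := by rw [sq_abs]; ring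
          rw [h3]
          exact pow_le_pow_left₀ (abs_nonneg _) (hM i) 2
      _ = M ^ 2 := by rw [← Finset.sum_mul, hρsum, one_mul]
  -- Cauchy–Schwarz
  have hsq : ∀ i : Fin m, Real.sqrt (ρ i) * Real.sqrt (ρ i) = ρ i := fun i =>
    Real.mul_self_sqrt (hρ i)
  have hCS : (v ⬝ᵥ θ) ^ 2 ≤ (∑ i, ρ i * (a i * a i)) * ∑ i, ρ i * (b i * b i) := by
    rw [hvθ]
    have h := Finset.sum_mul_sq_le_sq_mul_sq Finset.univ
      (fun i => Real.sqrt (ρ i) * a i) (fun i => Real.sqrt (ρ i) * b i)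
    calc (∑ i, ρ i * (a i * b i)) ^ 2
        = (∑ i, (Real.sqrt (ρ i) * a i) * (Real.sqrt (ρ i) * b i)) ^ 2 := by
          congr 1
          apply Finset.sum_congr rfl
          intro i _
          rw [show Real.sqrt (ρ i) * a i * (Real.sqrt (ρ i) * b i)
            = (Real.sqrt (ρ i) * Real.sqrt (ρ i)) * (a i * b i) by ring, hsq i]
      _ ≤ (∑ i, (Real.sqrt (ρ i) * a i) ^ 2) * ∑ i, (Real.sqrt (ρ i) * b i) ^ 2 := h
      _ = (∑ i, ρ i * (a i * a i)) * ∑ i, ρ i * (b i * b i) := by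
          congr 1
          · apply Finset.sum_congr rfl; intro i _
            rw [mul_pow, Real.sq_sqrt (hρ i), sq]
          · apply Finset.sum_congr rfl; intro i _
            rw [mul_pow, Real.sq_sqrt (hρ i), sq]
  have hfinal : (v ⬝ᵥ θ) ^ 2 ≤ 2 * (d : ℝ) * M ^ 2 := by
    calc (v ⬝ᵥ θ) ^ 2 ≤ (∑ i, ρ i * (a i * a i)) * ∑ i, ρ i * (b i * b i) := hCS
      _ ≤ M ^ 2 * (2 * (d : ℝ)) := mul_le_mul hasum hbsum hbsum0 (sq_nonneg M)
      _ = 2 * (d : ℝ) * M ^ 2 := by ring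
  calc |v ⬝ᵥ θ| = Real.sqrt ((v ⬝ᵥ θ) ^ 2) := (Real.sqrt_sq_eq_abs _).symm
    _ ≤ Real.sqrt (2 * (d : ℝ) * M ^ 2) := Real.sqrt_le_sqrt hfinal
    _ = Real.sqrt (2 * (d : ℝ)) * M := by
        rw [Real.sqrt_mul (by positivity), Real.sqrt_sq hM0]
end

section
/- Let d ≥ 1 be an integer, let H > 0 and ν > 0, and let Θ ⊆ ℝ^d be a nonempty set with ‖θ‖ ≤ H for all θ ∈ Θ. Suppose w_1, …, w_k ∈ ℝ^d satisfy, for every i ∈ {1,…,k}: sup_{θ∈Θ} |⟨θ, w_i⟩| ≤ 1, ‖(H^{-2} I + Σ_{j<i} w_j w_jᵀ)^{-1/2} w_i‖² ≥ 1/2, and ‖w_i‖ ≤ ν^{-1}. Then k ≤ 4 d log(1 + 16 ν^{-4} H^4). -/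
/-!
Write `V_m = H⁻² I + ∑_{j<m} w_j w_jᵀ`. By the matrix determinant lemma
`det V_{i+1} = det V_i · (1 + w_iᵀ V_i⁻¹ w_i) ≥ (3/2) det V_i`, so `det V_k ≥ (3/2)^k H^{-2d}`.
On the other hand AM-GM on the eigenvalues bounds `det V_k` by `(tr V_k / d)^d
≤ (H⁻² + k ν⁻² / d)^d`. Comparing the two gives `(3/2)^k ≤ (1 + (k/d) a)^d` with
`a = ν⁻² H² ≥ 1/2` (the latter from the first vector, as `V_0 = H⁻² I`). Taking logs,
`x = k/d` satisfies `x log(3/2) ≤ log(1 + x a)`; the tangent line of `log(1 + x a)` at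
`x = 4 log(1 + 16 a²)` together with `log(3/2) ≥ 2/5` shows that no larger `x` can do so.
-/

open Matrix Finset Real

theorem Real.prod_le_sum_div_card_pow {ι : Type*} (s : Finset ι) {z : ι → ℝ}
    (hz : ∀ i ∈ s, 0 ≤ z i) : ∏ i ∈ s, z i ≤ ((∑ i ∈ s, z i) / #s) ^ #s := by
  rcases s.eq_empty_or_nonempty with rfl | hs
  · simp
  have hn : (#s : ℝ) ≠ 0 := by exact_mod_cast hs.card_ne_zero
  have amgm := geom_mean_le_arith_mean_weighted s (fun _ => (#s : ℝ)⁻¹) z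
    (fun _ _ => by positivity) (by simp [hn]) hz
  rw [← Finset.mul_sum, inv_mul_eq_div] at amgm
  calc ∏ i ∈ s, z i = (∏ i ∈ s, z i ^ (#s : ℝ)⁻¹) ^ #s := by
        rw [← Finset.prod_pow]
        exact prod_congr rfl fun i hi => (rpow_inv_natCast_pow (hz i hi) hs.card_ne_zero).symm
    _ ≤ _ := pow_le_pow_left₀ (prod_nonneg fun i hi => rpow_nonneg (hz i hi) _) amgm _

theorem Matrix.IsSymm.dotProduct_mulVec_mulVec_self {m R : Type*} [Fintype m] [CommSemiring R]
    {A : Matrix m m R} (hA : A.IsSymm) (v : m → R) :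
    (A *ᵥ v) ⬝ᵥ (A *ᵥ v) = v ⬝ᵥ ((A * A) *ᵥ v) := by
  rw [dotProduct_mulVec, ← mulVec_transpose, hA.eq, mulVec_mulVec, dotProduct_comm]

section Matrix

variable {n : Type*} [Fintype n] [DecidableEq n]

theorem Matrix.PosSemidef.det_le_trace_div_card_pow {A : Matrix n n ℝ} (hA : A.PosSemidef) :
    A.det ≤ (A.trace / Fintype.card n) ^ Fintype.card n := by
  rw [hA.isHermitian.det_eq_prod_eigenvalues, hA.isHermitian.trace_eq_sum_eigenvalues]
  exact prod_le_sum_div_card_pow univ fun i _ => hA.eigenvalues_nonneg i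

theorem Matrix.det_add_vecMulVec {R : Type*} [CommRing R] {A : Matrix n n R} (hA : IsUnit A.det)
    (u v : n → R) : (A + vecMulVec u v).det = A.det * (1 + v ⬝ᵥ (A⁻¹ *ᵥ u)) := by
  rw [vecMulVec_eq Unit, det_add_replicateCol_mul_replicateRow hA, Matrix.mul_assoc,
    ← replicateCol_mulVec, det_unique (n := Unit)]
  simp [replicateRow_mul_replicateCol_apply]

end Matrix

section RegularizedGram

variable {n : Type*} [DecidableEq n] {k : ℕ}

def regularizedGram (ρ : ℝ) (w : Fin k → n → ℝ) (m : ℕ) : Matrix n n ℝ :=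
  ρ • 1 + ∑ j : Fin k, if (j : ℕ) < m then vecMulVec (w j) (w j) else 0

variable {ρ : ℝ} {w : Fin k → n → ℝ}

theorem regularizedGram_zero : regularizedGram ρ w 0 = ρ • 1 := by
  simp [regularizedGram]

theorem regularizedGram_succ (i : Fin k) :
    regularizedGram ρ w ((i : ℕ) + 1) = regularizedGram ρ w i + vecMulVec (w i) (w i) := by
  have hsplit : ∀ j : Fin k, (if (j : ℕ) < i + 1 then vecMulVec (w j) (w j) else 0) =
      (if (j : ℕ) < i then vecMulVec (w j) (w j) else 0) +
        if j = i then vecMulVec (w j) (w j) else 0 := by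
    intro j
    by_cases hji : j = i
    · simp [hji]
    · have hji' : (j : ℕ) ≠ i := fun h => hji (Fin.ext h)
      simp only [hji, if_false, add_zero]
      split_ifs <;> first | rfl | omega
  simp only [regularizedGram, hsplit, sum_add_distrib, sum_ite_eq', mem_univ, if_true, add_assoc]

variable [Fintype n]

theorem posDef_regularizedGram (hρ : 0 < ρ) (m : ℕ) : (regularizedGram ρ w m).PosDef := by
  refine (PosDef.one.smul hρ).add_posSemidef (posSemidef_sum _ fun j _ => ?_)
  split_ifs
  · simpa using posSemidef_vecMulVec_self_star (w j)
  · exact .zero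

theorem trace_regularizedGram_self :
    (regularizedGram ρ w k).trace = Fintype.card n * ρ + ∑ j, w j ⬝ᵥ w j := by
  simp [regularizedGram, trace_sum, mul_comm]

theorem dotProduct_inv_regularizedGram_zero_mulVec (hρ : ρ ≠ 0) (v : n → ℝ) :
    v ⬝ᵥ ((regularizedGram ρ w 0)⁻¹ *ᵥ v) = ρ⁻¹ * (v ⬝ᵥ v) := by
  have hinv : (ρ • (1 : Matrix n n ℝ))⁻¹ = ρ⁻¹ • 1 := inv_eq_left_inv (by simp [smul_smul, hρ])
  simp [regularizedGram_zero, hinv, smul_mulVec]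

theorem pow_mul_pow_le_det_regularizedGram (hρ : 0 < ρ) {c : ℝ} (hc : 0 ≤ c)
    (hq : ∀ i : Fin k, c ≤ 1 + w i ⬝ᵥ ((regularizedGram ρ w i)⁻¹ *ᵥ w i)) :
    ∀ m ≤ k, c ^ m * ρ ^ Fintype.card n ≤ (regularizedGram ρ w m).det := by
  intro m
  induction m with
  | zero => simp [regularizedGram_zero]
  | succ m ih =>
    intro hm
    have hdet := (posDef_regularizedGram (w := w) hρ m).det_pos
    calc c ^ (m + 1) * ρ ^ Fintype.card n = c * (c ^ m * ρ ^ Fintype.card n) := by ring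
      _ ≤ (1 + w ⟨m, hm⟩ ⬝ᵥ ((regularizedGram ρ w m)⁻¹ *ᵥ w ⟨m, hm⟩)) *
          (regularizedGram ρ w m).det := by
        gcongr
        exacts [(hc.trans (hq _)), hq ⟨m, hm⟩, ih (by omega)]
      _ = (regularizedGram ρ w (m + 1)).det := by
        rw [regularizedGram_succ ⟨m, hm⟩, det_add_vecMulVec hdet.ne'.isUnit, mul_comm]

theorem det_regularizedGram_self_le [Nonempty n] {B : ℝ} (hρ : 0 < ρ)
    (hB : ∀ j, w j ⬝ᵥ w j ≤ B) :
    (regularizedGram ρ w k).det ≤ (ρ + k * B / Fintype.card n) ^ Fintype.card n := by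
  have hpsd := (posDef_regularizedGram (w := w) hρ k).posSemidef
  refine hpsd.det_le_trace_div_card_pow.trans (pow_le_pow_left₀ ?_ ?_ _)
  · exact div_nonneg hpsd.trace_nonneg (Nat.cast_nonneg _)
  · have hsum : ∑ j, w j ⬝ᵥ w j ≤ k * B := by
      simpa using sum_le_sum fun j (_ : j ∈ univ) => hB j
    rw [trace_regularizedGram_self, add_div, mul_div_cancel_left₀ _ (by positivity)]
    gcongr

theorem pow_le_one_add_pow_of_le_dotProduct_inv_regularizedGram [Nonempty n] (hρ : 0 < ρ)
    {c B : ℝ} (hc : 0 ≤ c)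
    (hq : ∀ i : Fin k, c ≤ 1 + w i ⬝ᵥ ((regularizedGram ρ w i)⁻¹ *ᵥ w i))
    (hB : ∀ j, w j ⬝ᵥ w j ≤ B) :
    c ^ k ≤ (1 + k / Fintype.card n * (B / ρ)) ^ Fintype.card n := by
  have h := (pow_mul_pow_le_det_regularizedGram hρ hc hq k le_rfl).trans
    (det_regularizedGram_self_le hρ hB)
  have hsplit : ρ + k * B / Fintype.card n = ρ * (1 + k / Fintype.card n * (B / ρ)) := by
    field_simp
  rw [hsplit, mul_pow, mul_comm (ρ ^ _)] at h
  exact le_of_mul_le_mul_right h (by positivity)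

end RegularizedGram

theorem two_fifths_le_log_three_halves : 2 / 5 ≤ log (3 / 2) := by
  have h0 := le_hasSum (hasSum_log_one_add_inv (a := 2) (by norm_num)) 0 fun j _ => by positivity
  norm_num at h0 ⊢
  exact h0

theorem two_mul_log_one_add_four_mul_log_mul_le {a : ℝ} (ha : 0 ≤ a) :
    2 * log (1 + 4 * log (1 + 16 * a ^ 2) * a) ≤ 3 * log (1 + 16 * a ^ 2) := by
  have hL0 : 0 ≤ log (1 + 16 * a ^ 2) := log_nonneg (by nlinarith)
  have hL : log (1 + 16 * a ^ 2) ≤ 16 * a ^ 2 := by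
    linarith [log_le_sub_one_of_pos (by positivity : (0 : ℝ) < 1 + 16 * a ^ 2)]
  have hpoly : (1 + 4 * log (1 + 16 * a ^ 2) * a) ^ 2 ≤ (1 + 16 * a ^ 2) ^ 3 := by
    -- `(1 + 64 a³)² ≤ (1 + 16 a²)³` because `128 a³ ≤ 48 a² + 768 a⁴` (AM-GM)
    have : 4 * log (1 + 16 * a ^ 2) * a ≤ 64 * a ^ 3 := by nlinarith
    nlinarith [sq_nonneg (a * (16 * a - 4)), pow_nonneg ha 3, mul_nonneg hL0 ha]
  have h := log_le_log (by positivity) hpoly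
  rw [log_pow, log_pow] at h
  exact_mod_cast h

theorem le_four_mul_log_of_mul_log_three_halves_le {x a : ℝ} (ha : 1 / 2 ≤ a)
    (h : x * log (3 / 2) ≤ log (1 + x * a)) : x ≤ 4 * log (1 + 16 * a ^ 2) := by
  set L := log (1 + 16 * a ^ 2)
  have hL : 4 / 5 ≤ L := by
    have h5 : (1 + 16 * a ^ 2)⁻¹ ≤ 5⁻¹ := inv_anti₀ (by norm_num) (by nlinarith)
    linarith [one_sub_inv_le_log_of_pos (by positivity : (0 : ℝ) < 1 + 16 * a ^ 2)]
  by_contra! hx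
  have hP : 0 < 1 + 4 * L * a := by nlinarith
  have hslope : a / (1 + 4 * L * a) ≤ 2 / 5 := by
    rw [div_le_iff₀ hP]
    nlinarith
  have htangent :
      log (1 + x * a) ≤ log (1 + 4 * L * a) + (x - 4 * L) * (a / (1 + 4 * L * a)) := by
    have h' := log_le_sub_one_of_pos (div_pos (by nlinarith : 0 < 1 + x * a) hP)
    rw [log_div (by nlinarith) hP.ne'] at h'
    have e : (1 + x * a) / (1 + 4 * L * a) - 1 = (x - 4 * L) * (a / (1 + 4 * L * a)) := by
      field_simp
      ring
    linarith
  linarith [mul_le_mul_of_nonneg_left two_fifths_le_log_three_halves (by linarith : 0 ≤ x),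
    two_mul_log_one_add_four_mul_log_mul_le (by linarith : 0 ≤ a),
    mul_le_mul_of_nonneg_left hslope (by linarith : 0 ≤ x - 4 * L)]

theorem le_four_mul_mul_log_of_three_halves_pow_le {k d : ℕ} (hd : 0 < d) {a : ℝ} (ha : 1 / 2 ≤ a)
    (h : (3 / 2 : ℝ) ^ k ≤ (1 + k / d * a) ^ d) : (k : ℝ) ≤ 4 * d * log (1 + 16 * a ^ 2) := by
  have hd' : (0 : ℝ) < d := by exact_mod_cast hd
  have hlog := log_le_log (by positivity) h
  rw [log_pow, log_pow] at hlog
  have hx : (k / d : ℝ) * log (3 / 2) ≤ log (1 + k / d * a) := by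
    rw [div_mul_eq_mul_div, div_le_iff₀ hd']
    linarith
  have := le_four_mul_log_of_mul_log_three_halves_le ha hx
  rw [div_le_iff₀ hd'] at this
  linarith

theorem preconditioning_length_general {d : ℕ} (hd : 1 ≤ d) (H ν : ℝ) (hH : 0 < H)
    {k : ℕ} (w : Fin k → Fin d → ℝ)
    (R : Fin k → Matrix (Fin d) (Fin d) ℝ)
    (hRps : ∀ i, (R i).PosSemidef)
    (hRsq : ∀ i : Fin k, R i * R i =
      ((H ^ 2)⁻¹ • (1 : Matrix (Fin d) (Fin d) ℝ) +
        ∑ j : Fin k, if (j : ℕ) < (i : ℕ) then vecMulVec (w j) (w j) else 0)⁻¹)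
    (hw2 : ∀ i, (1 : ℝ) / 2 ≤ (R i *ᵥ w i) ⬝ᵥ (R i *ᵥ w i))
    (hw3 : ∀ i, Real.sqrt (w i ⬝ᵥ w i) ≤ ν⁻¹) :
    (k : ℝ) ≤ 4 * (d : ℝ) * Real.log (1 + 16 * ν⁻¹ ^ 4 * H ^ 4) := by
  obtain rfl | hk := k.eq_zero_or_pos
  · simpa using mul_nonneg (by positivity) (log_nonneg (le_add_of_nonneg_right (by positivity)))
  have : Nonempty (Fin d) := ⟨⟨0, hd⟩⟩
  have hρ : 0 < (H ^ 2)⁻¹ := by positivity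
  have hq : ∀ i : Fin k, 1 / 2 ≤ w i ⬝ᵥ ((regularizedGram (H ^ 2)⁻¹ w i)⁻¹ *ᵥ w i) := fun i =>
    (hw2 i).trans_eq <| by
      rw [(isHermitian_iff_isSymm.mp (hRps i).isHermitian).dotProduct_mulVec_mulVec_self, hRsq i]
      rfl
  have hB : ∀ i, w i ⬝ᵥ w i ≤ ν⁻¹ ^ 2 := fun i => (sqrt_le_iff.mp (hw3 i)).2
  have ha : 1 / 2 ≤ ν⁻¹ ^ 2 / (H ^ 2)⁻¹ := by
    have h0 := hq ⟨0, hk⟩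
    rw [Fin.val_mk, dotProduct_inv_regularizedGram_zero_mulVec hρ.ne'] at h0
    rw [div_eq_inv_mul (ν⁻¹ ^ 2)]
    exact h0.trans (by gcongr; exact hB _)
  have hpow := pow_le_one_add_pow_of_le_dotProduct_inv_regularizedGram hρ (c := 3 / 2)
    (by norm_num) (fun i => by linarith [hq i]) hB
  rw [Fintype.card_fin] at hpow
  convert le_four_mul_mul_log_of_three_halves_pow_le hd ha hpow using 4
  field_simp

/-- **Length of a valid ν-preconditioning sequence.**  Let `Θ ⊆ ℝ^d` be nonempty with
`‖θ‖ ≤ H` for all `θ ∈ Θ`.  Suppose `w_1, …, w_k` satisfy, for each `i`: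
`sup_{θ∈Θ} |⟨θ, w_i⟩| ≤ 1`, `‖(H⁻²I + ∑_{j<i} w_j w_jᵀ)^{-1/2} w_i‖² ≥ 1/2`
(where `R i` is the positive semidefinite square root of the inverse of
`H⁻²I + ∑_{j<i} w_j w_jᵀ`), and `‖w_i‖ ≤ ν⁻¹`.  Then `k ≤ 4 d log(1 + 16 ν⁻⁴ H⁴)`. -/
theorem preconditioning_length {d : ℕ} (hd : 1 ≤ d) (H ν : ℝ) (hH : 0 < H) (hν : 0 < ν)
    (Θ : Set (Fin d → ℝ)) (hΘ : Θ.Nonempty)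
    (hΘbd : ∀ θ ∈ Θ, Real.sqrt (θ ⬝ᵥ θ) ≤ H)
    {k : ℕ} (w : Fin k → Fin d → ℝ)
    (R : Fin k → Matrix (Fin d) (Fin d) ℝ)
    (hRps : ∀ i, (R i).PosSemidef)
    (hRsq : ∀ i : Fin k, R i * R i =
      ((H ^ 2)⁻¹ • (1 : Matrix (Fin d) (Fin d) ℝ) +
        ∑ j : Fin k, if (j : ℕ) < (i : ℕ) then vecMulVec (w j) (w j) else 0)⁻¹)
    (hw1 : ∀ i, ∀ θ ∈ Θ, |θ ⬝ᵥ w i| ≤ 1)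
    (hw2 : ∀ i, (1 : ℝ) / 2 ≤ (R i *ᵥ w i) ⬝ᵥ (R i *ᵥ w i))
    (hw3 : ∀ i, Real.sqrt (w i ⬝ᵥ w i) ≤ ν⁻¹) :
    (k : ℝ) ≤ 4 * (d : ℝ) * Real.log (1 + 16 * ν⁻¹ ^ 4 * H ^ 4) :=
  preconditioning_length_general hd H ν hH w R hRps hRsq hw2 hw3
end

section
/- Let X be a nonempty set, let 𝒜 be a finite linearly ordered set of actions with |𝒜| = A, let d ≥ 1 and n ≥ 1 be integers with 3 d n A² ≥ (d+1)², let H > 0, and let φ : X × 𝒜 → ℝ^d. For θ ∈ ℝ^d let π(·; θ) : X → 𝒜 be defined by π(x; θ) = the least element of argmax_{a ∈ 𝒜} ⟨φ(x, a), θ⟩. For parameters θ_1, …, θ_d, θ', θ'' in the closed Euclidean ball of radius H and γ > 0, define the policy π_{θ_{1:d}, θ', θ'', γ} : X → 𝒜 by π_{θ_{1:d}, θ', θ'', γ}(x) = π(x; θ') if max_{a, a' ∈ 𝒜, i ∈ {1,…,d}} ⟨φ(x, a) − φ(x, a'), θ_i⟩ ≥ γ, and π_{θ_{1:d}, θ',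 θ'', γ}(x) = π(x; θ'') otherwise. Then for any points x_1, …, x_n ∈ X, the number of distinct tuples (π_{θ_{1:d}, θ', θ'', γ}(x_1), …, π_{θ_{1:d}, θ', θ'', γ}(x_n)) ∈ 𝒜^n obtained as the parameters range over all admissible values is at most (81 n A² / d)^{(d+1)²}. -/
open Matrix

/-- The greedy (argmax-linear) policy: `π(x; θ)` is the least element of
`argmax_{a ∈ 𝒜} ⟨φ(x, a), θ⟩`. -/
noncomputable def greedyPolicy {X : Type*} {𝒜 : Type*} [Fintype 𝒜] [LinearOrder 𝒜]
    [Nonempty 𝒜] {d : ℕ} (φ : X → 𝒜 → Fin d → ℝ) (θ : Fin d → ℝ) (x : X) : 𝒜 :=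
  (Finset.univ.filter fun a : 𝒜 => ∀ b : 𝒜, φ x b ⬝ᵥ θ ≤ φ x a ⬝ᵥ θ).min'
    (by
      obtain ⟨a, -, ha⟩ := Finset.exists_max_image (Finset.univ : Finset 𝒜)
        (fun a => φ x a ⬝ᵥ θ) Finset.univ_nonempty
      exact ⟨a, Finset.mem_filter.mpr ⟨Finset.mem_univ a, fun b => ha b (Finset.mem_univ b)⟩⟩)

/-- A benchmark policy: follow the greedy policy of `θ'` on states where
`max_{a, a', i} ⟨φ(x,a) − φ(x,a'), θ_i⟩ ≥ γ`, and the greedy policy of `θ''` elsewhere. -/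
noncomputable def benchPolicy {X : Type*} {𝒜 : Type*} [Fintype 𝒜] [LinearOrder 𝒜]
    [Nonempty 𝒜] {d : ℕ} (φ : X → 𝒜 → Fin d → ℝ)
    (θs : Fin d → Fin d → ℝ) (θ' θ'' : Fin d → ℝ) (γ : ℝ) (x : X) : 𝒜 :=
  if ∃ (a a' : 𝒜) (i : Fin d), γ ≤ (φ x a - φ x a') ⬝ᵥ θs i
  then greedyPolicy φ θ' x
  else greedyPolicy φ θ'' x

section GrowthAux

/-- Dual functional `θ ↦ v ⬝ᵥ θ`. -/
noncomputable def dotDual {d : ℕ} (v : Fin d → ℝ) : Module.Dual ℝ (Fin d → ℝ) where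
  toFun θ := v ⬝ᵥ θ
  map_add' a b := dotProduct_add v a b
  map_smul' c a := by simp [dotProduct_smul, smul_eq_mul]

@[simp] lemma dotDual_apply {d : ℕ} (v θ : Fin d → ℝ) : dotDual v θ = v ⬝ᵥ θ := rfl

/-- Dual functional `(θs, γ) ↦ v ⬝ᵥ θs i - γ`. -/
noncomputable def dotDual2 {d : ℕ} (v : Fin d → ℝ) (i : Fin d) :
    Module.Dual ℝ ((Fin d → Fin d → ℝ) × ℝ) where
  toFun p := v ⬝ᵥ p.1 i - p.2
  map_add' a b := by
    simp [dotProduct_add]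
    ring
  map_smul' c a := by
    simp [dotProduct_smul, smul_eq_mul]
    ring

@[simp] lemma dotDual2_apply {d : ℕ} (v : Fin d → ℝ) (i : Fin d)
    (p : (Fin d → Fin d → ℝ) × ℝ) : dotDual2 v i p = v ⬝ᵥ p.1 i - p.2 := rfl

/-- Decode a greedy tuple from the comparison pattern. -/
noncomputable def decodeG {𝒜 : Type*} [Fintype 𝒜] [LinearOrder 𝒜] [Nonempty 𝒜] {n : ℕ}
    (q : Finset (Fin n × 𝒜 × 𝒜)) (j : Fin n) : 𝒜 :=
  if h : (Finset.univ.filter fun a : 𝒜 => ∀ b : 𝒜, (j, a, b) ∈ q).Nonempty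
  then (Finset.univ.filter fun a : 𝒜 => ∀ b : 𝒜, (j, a, b) ∈ q).min' h
  else Classical.arbitrary 𝒜

/-- Decode the threshold region from the pattern. -/
def decodeS {𝒜 : Type*} {n d : ℕ} (q : Finset (Fin n × 𝒜 × 𝒜 × Fin d)) : Set (Fin n) :=
  {j | ∃ a a' i, (j, a, a', i) ∈ q}

open Classical in
/-- Combine two tuples along a region. -/
noncomputable def combineMap {𝒜 : Type*} {n : ℕ}
    (z : Set (Fin n) × (Fin n → 𝒜) × (Fin n → 𝒜)) : Fin n → 𝒜 :=
  fun j => if j ∈ z.1 then z.2.1 j else z.2.2 j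

lemma ncard_prod' {α β : Type*} (s : Set α) (t : Set β) :
    (s ×ˢ t).ncard = s.ncard * t.ncard := by
  rw [← Nat.card_coe_set_eq, ← Nat.card_coe_set_eq, ← Nat.card_coe_set_eq,
    ← Nat.card_prod]
  exact Nat.card_congr (Equiv.Set.prod s t)

open Finset Module in
/-- Sign patterns of linear functionals: the number of realizable "nonnegativity patterns"
is at most the number of subsets of size at most the dimension (Sauer–Shelah). -/
lemma pattern_ncard_le {ι Θ : Type*} [Fintype ι] [DecidableEq ι]
    [AddCommGroup Θ] [Module ℝ Θ] [FiniteDimensional ℝ Θ]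
    (L : ι → Module.Dual ℝ Θ) :
    {q : Finset ι | ∃ θ : Θ, ∀ i, i ∈ q ↔ 0 ≤ L i θ}.ncard
      ≤ ∑ k ∈ Finset.range (finrank ℝ Θ + 1), (Fintype.card ι).choose k := by
  classical
  set K := finrank ℝ Θ with hK
  set P : Set (Finset ι) := {q | ∃ θ : Θ, ∀ i, i ∈ q ↔ 0 ≤ L i θ} with hP
  have hPfin : P.Finite := Set.toFinite _
  set F : Finset (Finset ι) := hPfin.toFinset with hFdef
  have hF : ∀ q, q ∈ F ↔ ∃ θ : Θ, ∀ i, i ∈ q ↔ 0 ≤ L i θ := by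
    intro q; rw [hFdef, Set.Finite.mem_toFinset]; rfl
  have hshat : ∀ s ∈ F.shatterer, s.card ≤ K := by
    intro s hs
    rw [Finset.mem_shatterer] at hs
    by_contra hcard
    push_neg at hcard
    -- linear dependence
    have hdep : ¬ LinearIndependent ℝ (fun i : ↥s => L i) := by
      intro h
      have h2 := h.fintype_card_le_finrank
      rw [Subspace.dual_finrank_eq, Fintype.card_coe] at h2
      omega
    obtain ⟨g, hg0, i₀, hgi₀⟩ := Fintype.not_linearIndependent_iff.mp hdep
    set c : ι → ℝ := fun i => if h : i ∈ s then g ⟨i, h⟩ else 0 with hc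
    have hcc : ∀ i : ↥s, c i = g i := by
      intro i; rw [hc]; simp
    have hsum : ∑ i ∈ s, c i • L i = 0 := by
      rw [← Finset.sum_attach s (fun i => c i • L i)]
      rw [← hg0]
      exact Finset.sum_congr rfl fun i _ => by rw [hcc]
    have hval : ∀ θ : Θ, ∑ i ∈ s, c i * L i θ = 0 := by
      intro θ
      have h3 := congrArg (fun f : Module.Dual ℝ Θ => f θ) hsum
      simpa [LinearMap.sum_apply, LinearMap.smul_apply, smul_eq_mul] using h3
    -- first pattern: positive part
    obtain ⟨u, hu, hsu⟩ := hs (Finset.filter_subset (fun i => 0 < c i) s)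
    obtain ⟨θ, hθ⟩ := (hF u).mp hu
    have hmem : ∀ i ∈ s, (i ∈ u ↔ 0 < c i) := by
      intro i hi
      constructor
      · intro hiu
        have : i ∈ s ∩ u := Finset.mem_inter.mpr ⟨hi, hiu⟩
        rw [hsu] at this
        exact (Finset.mem_filter.mp this).2
      · intro hci
        have : i ∈ s ∩ u := by rw [hsu]; exact Finset.mem_filter.mpr ⟨hi, hci⟩
        exact (Finset.mem_inter.mp this).2
    have hterm : ∀ i ∈ s, 0 ≤ c i * L i θ := by
      intro i hi
      rcases lt_trichotomy (c i) 0 with h | h | h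
      · have hiu : i ∉ u := fun hiu => absurd ((hmem i hi).mp hiu) (by linarith)
        have hL : L i θ < 0 := lt_of_not_ge (fun hle => hiu ((hθ i).mpr hle))
        exact le_of_lt (mul_pos_of_neg_of_neg h hL)
      · simp [h]
      · exact mul_nonneg h.le ((hθ i).mp ((hmem i hi).mpr h))
    have hzero := (Finset.sum_eq_zero_iff_of_nonneg hterm).mp (hval θ)
    have hnonneg : ∀ i ∈ s, 0 ≤ c i := by
      intro i hi
      by_contra h
      push_neg at h
      have hiu : i ∉ u := fun hiu => absurd ((hmem i hi).mp hiu) (by linarith)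
      have hL : L i θ < 0 := lt_of_not_ge (fun hle => hiu ((hθ i).mpr hle))
      have := hzero i hi
      nlinarith
    -- second pattern: nonpositive part
    obtain ⟨u', hu', hsu'⟩ := hs (Finset.filter_subset (fun i => c i ≤ 0) s)
    obtain ⟨θ', hθ'⟩ := (hF u').mp hu'
    have hmem' : ∀ i ∈ s, (i ∈ u' ↔ c i ≤ 0) := by
      intro i hi
      constructor
      · intro hiu
        have : i ∈ s ∩ u' := Finset.mem_inter.mpr ⟨hi, hiu⟩
        rw [hsu'] at this
        exact (Finset.mem_filter.mp this).2
      · intro hci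
        have : i ∈ s ∩ u' := by rw [hsu']; exact Finset.mem_filter.mpr ⟨hi, hci⟩
        exact (Finset.mem_inter.mp this).2
    have hterm' : ∀ i ∈ s, c i * L i θ' ≤ 0 := by
      intro i hi
      rcases eq_or_lt_of_le (hnonneg i hi) with h | h
      · simp [← h]
      · have hiu : i ∉ u' := fun hiu => absurd ((hmem' i hi).mp hiu) (by linarith)
        have hL : L i θ' < 0 := lt_of_not_ge (fun hle => hiu ((hθ' i).mpr hle))
        exact le_of_lt (mul_neg_of_pos_of_neg h hL)
    have hi₀s : (i₀ : ι) ∈ s := i₀.2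
    have hci₀ : 0 < c i₀ := by
      rcases eq_or_lt_of_le (hnonneg _ hi₀s) with h | h
      · exact absurd (by rw [← hcc]; exact h.symm) hgi₀
      · exact h
    have hi₀u' : (i₀ : ι) ∉ u' := fun hiu => absurd ((hmem' _ hi₀s).mp hiu) (by linarith)
    have hL₀ : L i₀ θ' < 0 := lt_of_not_ge (fun hle => hi₀u' ((hθ' i₀).mpr hle))
    have hterm₀ : c i₀ * L i₀ θ' < 0 := mul_neg_of_pos_of_neg hci₀ hL₀
    have hrest : ∑ i ∈ s.erase i₀, c i * L i θ' ≤ 0 :=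
      Finset.sum_nonpos fun i hi => hterm' i (Finset.mem_of_mem_erase hi)
    have hsplit : c ↑i₀ * L ↑i₀ θ' + ∑ i ∈ s.erase ↑i₀, c i * L i θ'
        = ∑ i ∈ s, c i * L i θ' := Finset.add_sum_erase s (fun i => c i * L i θ') hi₀s
    have hv := hval θ'
    linarith
  -- count via Sauer–Shelah
  have h1 : P.ncard = F.card := (Set.ncard_eq_toFinset_card P hPfin)
  rw [h1]
  calc F.card ≤ F.shatterer.card := Finset.card_le_card_shatterer F
    _ ≤ ((Finset.range (K + 1)).biUnion fun k => (Finset.univ : Finset ι).powersetCard k).card := by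
        apply Finset.card_le_card
        intro s hs
        rw [Finset.mem_biUnion]
        exact ⟨s.card, Finset.mem_range.mpr (Nat.lt_succ_of_le (hshat s hs)),
          Finset.mem_powersetCard_univ.mpr rfl⟩
    _ ≤ ∑ k ∈ Finset.range (K + 1), ((Finset.univ : Finset ι).powersetCard k).card :=
        Finset.card_biUnion_le
    _ = ∑ k ∈ Finset.range (K + 1), (Fintype.card ι).choose k := by
        simp [Finset.card_powersetCard]

/-- The Chernoff-style bound on the partial sum of binomial coefficients. -/
lemma sum_choose_le_exp_pow (N K : ℕ) (hK : 1 ≤ K) :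
    ((∑ k ∈ Finset.range (K + 1), N.choose k : ℕ) : ℝ)
      ≤ (Real.exp 1 * ((N : ℝ) + K) / K) ^ K := by
  have hKpos : (0 : ℝ) < K := by exact_mod_cast hK
  have hNK : (0 : ℝ) < (N : ℝ) + K := by positivity
  set t : ℝ := (K : ℝ) / ((N : ℝ) + K) with ht
  have ht0 : 0 < t := by positivity
  have ht1 : t ≤ 1 := by
    rw [ht, div_le_one hNK]
    have : (0:ℝ) ≤ (N:ℝ) := Nat.cast_nonneg N
    linarith
  have key : t ^ K * (∑ k ∈ Finset.range (K + 1), (N.choose k : ℝ)) ≤ (1 + t) ^ N := by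
    calc t ^ K * ∑ k ∈ Finset.range (K + 1), (N.choose k : ℝ)
        = ∑ k ∈ Finset.range (K + 1), (N.choose k : ℝ) * t ^ K := by
          rw [Finset.mul_sum]; exact Finset.sum_congr rfl fun k _ => by ring
      _ ≤ ∑ k ∈ Finset.range (K + 1), (N.choose k : ℝ) * t ^ k := by
          apply Finset.sum_le_sum
          intro k hk
          exact mul_le_mul_of_nonneg_left
            (pow_le_pow_of_le_one ht0.le ht1 (Nat.lt_succ_iff.mp (Finset.mem_range.mp hk)))
            (Nat.cast_nonneg _)
      _ ≤ ∑ k ∈ Finset.range (N + K + 1), (N.choose k : ℝ) * t ^ k := by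
          apply Finset.sum_le_sum_of_subset_of_nonneg
          · exact Finset.range_subset_range.mpr (by omega)
          · intro k _ _; positivity
      _ = ∑ k ∈ Finset.range (N + 1), (N.choose k : ℝ) * t ^ k := by
          symm
          apply Finset.sum_subset (Finset.range_subset_range.mpr (by omega))
          intro k _ hk
          have : N < k := by simpa using hk
          simp [Nat.choose_eq_zero_of_lt this]
      _ = (1 + t) ^ N := by
          rw [add_comm 1 t, add_pow]
          exact Finset.sum_congr rfl fun k _ => by ring
  have hexp : (1 + t) ^ N ≤ Real.exp 1 ^ K := by
    have h1 : (1 + t) ^ N ≤ Real.exp t ^ N := by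
      apply pow_le_pow_left₀ (by linarith)
      linarith [Real.add_one_le_exp t]
    have h2 : Real.exp t ^ N = Real.exp (t * N) := by
      rw [← Real.exp_nat_mul]; ring_nf
    have h3 : t * N ≤ K := by
      rw [ht, div_mul_eq_mul_div, div_le_iff₀ hNK]
      have : (0:ℝ) ≤ (K:ℝ) * (K:ℝ) := by positivity
      nlinarith [(Nat.cast_nonneg N : (0:ℝ) ≤ (N:ℝ)), hKpos]
    have h4 : Real.exp (t * N) ≤ Real.exp (K : ℝ) := Real.exp_le_exp.mpr h3
    have h5 : Real.exp (K : ℝ) = Real.exp 1 ^ K := by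
      rw [← Real.exp_nat_mul]; ring_nf
    calc (1 + t) ^ N ≤ Real.exp t ^ N := h1
      _ = Real.exp (t * N) := h2
      _ ≤ Real.exp (K : ℝ) := h4
      _ = Real.exp 1 ^ K := h5
  have hpow : (0:ℝ) < t ^ K := pow_pos ht0 K
  have hfinal : (∑ k ∈ Finset.range (K + 1), (N.choose k : ℝ))
      ≤ Real.exp 1 ^ K * (1 / t) ^ K := by
    rw [one_div, inv_pow, ← div_eq_mul_inv, le_div_iff₀ hpow]
    calc (∑ k ∈ Finset.range (K + 1), (N.choose k : ℝ)) * t ^ K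
        = t ^ K * ∑ k ∈ Finset.range (K + 1), (N.choose k : ℝ) := by ring
      _ ≤ (1 + t) ^ N := key
      _ ≤ Real.exp 1 ^ K := hexp
  have hteq : 1 / t = ((N : ℝ) + K) / K := by
    rw [ht, one_div_div]
  calc ((∑ k ∈ Finset.range (K + 1), N.choose k : ℕ) : ℝ)
      = ∑ k ∈ Finset.range (K + 1), (N.choose k : ℝ) := by push_cast; ring
    _ ≤ Real.exp 1 ^ K * (1 / t) ^ K := hfinal
    _ = (Real.exp 1 * (((N : ℝ) + K) / K)) ^ K := by rw [hteq, mul_pow]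
    _ = (Real.exp 1 * ((N : ℝ) + K) / K) ^ K := by rw [mul_div_assoc]

lemma growth_numeric (d n A : ℕ) (hd : 1 ≤ d) (hn : 1 ≤ n) (hA1 : 1 ≤ A)
    (hdim : (d + 1) ^ 2 ≤ 3 * d * n * A ^ 2) :
    ((∑ k ∈ Finset.range (d * d + 1 + 1), (n * A * A * d).choose k : ℕ) : ℝ)
      * (((∑ k ∈ Finset.range (d + 1), (n * A * A).choose k : ℕ) : ℝ)
        * ((∑ k ∈ Finset.range (d + 1), (n * A * A).choose k : ℕ) : ℝ))
      ≤ (81 * (n : ℝ) * (A : ℝ) ^ 2 / (d : ℝ)) ^ ((d + 1) ^ 2) := by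
  have hd0 : (0 : ℝ) < d := by exact_mod_cast hd
  have hn0 : (0:ℝ) < n := by exact_mod_cast hn
  have hA0 : (0:ℝ) < A := by exact_mod_cast hA1
  have hm0 : (0 : ℝ) < (n : ℝ) * (A : ℝ) ^ 2 := by positivity
  have he3 : Real.exp 1 ≤ 3 := le_of_lt (lt_trans Real.exp_one_lt_d9 (by norm_num))
  have he0 : 0 < Real.exp 1 := Real.exp_pos 1
  have hd3m : (d : ℝ) ≤ 3 * ((n : ℝ) * (A : ℝ) ^ 2) := by
    have h1 : d * d ≤ d * (3 * (n * A ^ 2)) := by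
      calc d * d ≤ (d + 1) ^ 2 := by
            have : (d + 1) ^ 2 = d * d + 2 * d + 1 := by ring
            omega
        _ ≤ 3 * d * n * A ^ 2 := hdim
        _ = d * (3 * (n * A ^ 2)) := by ring
    have h2 : d ≤ 3 * (n * A ^ 2) := Nat.le_of_mul_le_mul_left h1 (by omega)
    have h3 := (Nat.cast_le (α := ℝ)).mpr h2
    push_cast at h3
    linarith
  set c : ℝ := 81 * (n : ℝ) * (A : ℝ) ^ 2 / (d : ℝ) with hcdef
  have hc0 : 0 ≤ c := by rw [hcdef]; positivity
  have hbase2 : Real.exp 1 * (((n * A * A : ℕ) : ℝ) + (d : ℕ)) / (d : ℕ) ≤ c := by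
    rw [hcdef]
    push_cast
    rw [div_le_div_iff₀ hd0 hd0]
    have k1 : Real.exp 1 * ((n:ℝ)*(A:ℝ)*(A:ℝ) + (d:ℝ)) ≤ 3 * ((n:ℝ)*(A:ℝ)*(A:ℝ) + (d:ℝ)) :=
      mul_le_mul_of_nonneg_right he3 (by positivity)
    nlinarith [mul_le_mul_of_nonneg_right k1 hd0.le,
      mul_le_mul_of_nonneg_right hd3m hd0.le, hm0, hd0,
      mul_nonneg hm0.le hd0.le]
  have hbase1 : Real.exp 1 * (((n * A * A * d : ℕ) : ℝ) + ((d * d + 1 : ℕ) : ℝ))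
      / ((d * d + 1 : ℕ) : ℝ) ≤ c := by
    rw [hcdef]
    push_cast
    rw [div_le_div_iff₀ (by positivity) hd0]
    have k1 : Real.exp 1 * ((n:ℝ)*(A:ℝ)*(A:ℝ)*(d:ℝ) + ((d:ℝ)*(d:ℝ)+1))
        ≤ 3 * ((n:ℝ)*(A:ℝ)*(A:ℝ)*(d:ℝ) + ((d:ℝ)*(d:ℝ)+1)) :=
      mul_le_mul_of_nonneg_right he3 (by positivity)
    have k2 : (d:ℝ)*((d:ℝ)*(d:ℝ)+1) ≤ 3*((n:ℝ)*(A:ℝ)^2)*((d:ℝ)*(d:ℝ)+1) :=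
      mul_le_mul_of_nonneg_right hd3m (by positivity)
    nlinarith [mul_le_mul_of_nonneg_right k1 hd0.le, k2, hm0, hd0,
      mul_nonneg hm0.le (mul_nonneg hd0.le hd0.le), mul_nonneg hm0.le hd0.le]
  have p1 : ((∑ k ∈ Finset.range (d * d + 1 + 1), (n * A * A * d).choose k : ℕ) : ℝ)
      ≤ c ^ (d * d + 1) :=
    le_trans (sum_choose_le_exp_pow (n * A * A * d) (d * d + 1) (by omega))
      (pow_le_pow_left₀ (by positivity) hbase1 _)
  have p2 : ((∑ k ∈ Finset.range (d + 1), (n * A * A).choose k : ℕ) : ℝ) ≤ c ^ d :=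
    le_trans (sum_choose_le_exp_pow (n * A * A) d hd)
      (pow_le_pow_left₀ (by positivity) hbase2 _)
  calc ((∑ k ∈ Finset.range (d * d + 1 + 1), (n * A * A * d).choose k : ℕ) : ℝ)
      * (((∑ k ∈ Finset.range (d + 1), (n * A * A).choose k : ℕ) : ℝ)
        * ((∑ k ∈ Finset.range (d + 1), (n * A * A).choose k : ℕ) : ℝ))
      ≤ c ^ (d * d + 1) * (c ^ d * c ^ d) := by
        gcongr <;> positivity
    _ = c ^ ((d + 1) ^ 2) := by
        rw [← pow_add, ← pow_add]
        congr 1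
        ring

end GrowthAux

set_option maxHeartbeats 1000000

/-- **Growth function bound for the benchmark policy class.**  On any `n` points
`x_1, …, x_n`, the number of distinct behaviour tuples of benchmark policies with
parameters in the ball of radius `H` and threshold `γ > 0` is at most
`(81 n A² / d)^{(d+1)²}`, provided `3 d n A² ≥ (d+1)²`. -/
theorem benchPolicy_growth {X : Type*} [Nonempty X]
    {𝒜 : Type*} [Fintype 𝒜] [LinearOrder 𝒜] [Nonempty 𝒜]
    (A : ℕ) (hA : A = Fintype.card 𝒜)
    {d n : ℕ} (hd : 1 ≤ d) (hn : 1 ≤ n)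
    (hdim : (d + 1) ^ 2 ≤ 3 * d * n * A ^ 2)
    (H : ℝ) (hH : 0 < H)
    (φ : X → 𝒜 → Fin d → ℝ) (x : Fin n → X) :
    (({t : Fin n → 𝒜 | ∃ (θs : Fin d → Fin d → ℝ) (θ' θ'' : Fin d → ℝ) (γ : ℝ),
        (∀ i, Real.sqrt (θs i ⬝ᵥ θs i) ≤ H) ∧ Real.sqrt (θ' ⬝ᵥ θ') ≤ H ∧
        Real.sqrt (θ'' ⬝ᵥ θ'') ≤ H ∧ 0 < γ ∧
        t = fun j => benchPolicy φ θs θ' θ'' γ (x j)}).ncard : ℝ)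
      ≤ (81 * (n : ℝ) * (A : ℝ) ^ 2 / (d : ℝ)) ^ ((d + 1) ^ 2) := by
  classical
  have hA1 : 1 ≤ A := by rw [hA]; exact Fintype.card_pos
  set L1 : (Fin n × 𝒜 × 𝒜) → Module.Dual ℝ (Fin d → ℝ) :=
    fun p => dotDual (φ (x p.1) p.2.1 - φ (x p.1) p.2.2) with hL1
  set L2 : (Fin n × 𝒜 × 𝒜 × Fin d) → Module.Dual ℝ ((Fin d → Fin d → ℝ) × ℝ) :=
    fun p => dotDual2 (φ (x p.1) p.2.1 - φ (x p.1) p.2.2.1) p.2.2.2 with hL2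
  set PG : Set (Finset (Fin n × 𝒜 × 𝒜)) := {q | ∃ θ, ∀ i, i ∈ q ↔ 0 ≤ L1 i θ} with hPG
  set PS : Set (Finset (Fin n × 𝒜 × 𝒜 × Fin d)) := {q | ∃ θ, ∀ i, i ∈ q ↔ 0 ≤ L2 i θ} with hPS
  set G : Set (Fin n → 𝒜) := decodeG '' PG with hG
  set S : Set (Set (Fin n)) := decodeS '' PS with hS
  -- the greedy tuple of θ is decoded from its pattern
  have hgreedy : ∀ θ : Fin d → ℝ,
      (fun j => greedyPolicy φ θ (x j))
        = decodeG (Finset.univ.filter fun i : Fin n × 𝒜 × 𝒜 => 0 ≤ L1 i θ) := by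
    intro θ
    funext j
    have hset : (Finset.univ.filter fun a : 𝒜 =>
          ∀ b : 𝒜, (j, a, b) ∈ (Finset.univ.filter fun i : Fin n × 𝒜 × 𝒜 => 0 ≤ L1 i θ))
        = (Finset.univ.filter fun a : 𝒜 => ∀ b : 𝒜, φ (x j) b ⬝ᵥ θ ≤ φ (x j) a ⬝ᵥ θ) := by
      apply Finset.filter_congr
      intro a _
      simp [hL1, sub_dotProduct, sub_nonneg]
    have hne : (Finset.univ.filter fun a : 𝒜 =>
        ∀ b : 𝒜, φ (x j) b ⬝ᵥ θ ≤ φ (x j) a ⬝ᵥ θ).Nonempty := by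
      obtain ⟨a, -, ha⟩ := Finset.exists_max_image (Finset.univ : Finset 𝒜)
        (fun a => φ (x j) a ⬝ᵥ θ) Finset.univ_nonempty
      exact ⟨a, Finset.mem_filter.mpr ⟨Finset.mem_univ a, fun b => ha b (Finset.mem_univ b)⟩⟩
    rw [decodeG]
    rw [hset, dif_pos hne]
    rfl
  -- the threshold region is decoded from its pattern
  have hregion : ∀ (θs : Fin d → Fin d → ℝ) (γ : ℝ),
      {j : Fin n | ∃ (a a' : 𝒜) (i : Fin d), γ ≤ (φ (x j) a - φ (x j) a') ⬝ᵥ θs i}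
        = decodeS (Finset.univ.filter
            fun p : Fin n × 𝒜 × 𝒜 × Fin d => 0 ≤ L2 p (θs, γ)) := by
    intro θs γ
    ext j
    simp [decodeS, hL2, sub_nonneg]
  -- the main inclusion
  have hsub : {t : Fin n → 𝒜 | ∃ (θs : Fin d → Fin d → ℝ) (θ' θ'' : Fin d → ℝ) (γ : ℝ),
        (∀ i, Real.sqrt (θs i ⬝ᵥ θs i) ≤ H) ∧ Real.sqrt (θ' ⬝ᵥ θ') ≤ H ∧
        Real.sqrt (θ'' ⬝ᵥ θ'') ≤ H ∧ 0 < γ ∧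
        t = fun j => benchPolicy φ θs θ' θ'' γ (x j)}
      ⊆ combineMap '' (S ×ˢ (G ×ˢ G)) := by
    rintro t ⟨θs, θ', θ'', γ, -, -, -, -, ht⟩
    refine ⟨({j : Fin n | ∃ (a a' : 𝒜) (i : Fin d), γ ≤ (φ (x j) a - φ (x j) a') ⬝ᵥ θs i},
      fun j => greedyPolicy φ θ' (x j), fun j => greedyPolicy φ θ'' (x j)),
      ⟨?_, ?_, ?_⟩, ?_⟩
    · rw [hregion θs γ, hS]
      exact ⟨_, ⟨(θs, γ), fun i => by simp⟩, rfl⟩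
    · rw [hgreedy θ', hG]
      exact ⟨_, ⟨θ', fun i => by simp⟩, rfl⟩
    · rw [hgreedy θ'', hG]
      exact ⟨_, ⟨θ'', fun i => by simp⟩, rfl⟩
    · rw [ht]
      funext j
      by_cases hc : ∃ (a a' : 𝒜) (i : Fin d), γ ≤ (φ (x j) a - φ (x j) a') ⬝ᵥ θs i
      · simp [combineMap, benchPolicy, hc]
      · simp [combineMap, benchPolicy, hc]
  -- counting
  have h1 : ({t : Fin n → 𝒜 | ∃ (θs : Fin d → Fin d → ℝ) (θ' θ'' : Fin d → ℝ) (γ : ℝ),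
        (∀ i, Real.sqrt (θs i ⬝ᵥ θs i) ≤ H) ∧ Real.sqrt (θ' ⬝ᵥ θ') ≤ H ∧
        Real.sqrt (θ'' ⬝ᵥ θ'') ≤ H ∧ 0 < γ ∧
        t = fun j => benchPolicy φ θs θ' θ'' γ (x j)}).ncard
      ≤ PS.ncard * (PG.ncard * PG.ncard) := by
    calc _ ≤ (combineMap '' (S ×ˢ (G ×ˢ G))).ncard :=
          Set.ncard_le_ncard hsub (Set.toFinite _)
      _ ≤ (S ×ˢ (G ×ˢ G)).ncard := Set.ncard_image_le (Set.toFinite _)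
      _ = S.ncard * (G.ncard * G.ncard) := by rw [ncard_prod', ncard_prod']
      _ ≤ PS.ncard * (PG.ncard * PG.ncard) := by
          refine Nat.mul_le_mul ?_ (Nat.mul_le_mul ?_ ?_) <;>
            exact Set.ncard_image_le (Set.toFinite _)
  -- pattern counts
  have hrank1 : Module.finrank ℝ (Fin d → ℝ) = d := by
    simp [Module.finrank_pi]
  have hrank2 : Module.finrank ℝ ((Fin d → Fin d → ℝ) × ℝ) = d * d + 1 := by
    rw [Module.finrank_prod, Module.finrank_self, Module.finrank_pi_fintype]
    simp [Module.finrank_pi, Finset.sum_const, Fintype.card_fin, smul_eq_mul]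
  have hcard1 : Fintype.card (Fin n × 𝒜 × 𝒜) = n * A * A := by
    simp [hA]; ring
  have hcard2 : Fintype.card (Fin n × 𝒜 × 𝒜 × Fin d) = n * A * A * d := by
    simp [hA]; ring
  have hPGle : PG.ncard ≤ ∑ k ∈ Finset.range (d + 1), (n * A * A).choose k := by
    have h := pattern_ncard_le L1
    rwa [hrank1, hcard1] at h
  have hPSle : PS.ncard ≤ ∑ k ∈ Finset.range (d * d + 1 + 1), (n * A * A * d).choose k := by
    have h := pattern_ncard_le L2
    rwa [hrank2, hcard2] at h
  have h2 : ({t : Fin n → 𝒜 | ∃ (θs : Fin d → Fin d → ℝ) (θ' θ'' : Fin d → ℝ) (γ : ℝ),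
        (∀ i, Real.sqrt (θs i ⬝ᵥ θs i) ≤ H) ∧ Real.sqrt (θ' ⬝ᵥ θ') ≤ H ∧
        Real.sqrt (θ'' ⬝ᵥ θ'') ≤ H ∧ 0 < γ ∧
        t = fun j => benchPolicy φ θs θ' θ'' γ (x j)}).ncard
      ≤ (∑ k ∈ Finset.range (d * d + 1 + 1), (n * A * A * d).choose k)
        * ((∑ k ∈ Finset.range (d + 1), (n * A * A).choose k)
          * (∑ k ∈ Finset.range (d + 1), (n * A * A).choose k)) :=
    le_trans h1 (Nat.mul_le_mul hPSle (Nat.mul_le_mul hPGle hPGle))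
  calc (({t : Fin n → 𝒜 | ∃ (θs : Fin d → Fin d → ℝ) (θ' θ'' : Fin d → ℝ) (γ : ℝ),
        (∀ i, Real.sqrt (θs i ⬝ᵥ θs i) ≤ H) ∧ Real.sqrt (θ' ⬝ᵥ θ') ≤ H ∧
        Real.sqrt (θ'' ⬝ᵥ θ'') ≤ H ∧ 0 < γ ∧
        t = fun j => benchPolicy φ θs θ' θ'' γ (x j)}).ncard : ℝ)
      ≤ (((∑ k ∈ Finset.range (d * d + 1 + 1), (n * A * A * d).choose k)
        * ((∑ k ∈ Finset.range (d + 1), (n * A * A).choose k)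
          * (∑ k ∈ Finset.range (d + 1), (n * A * A).choose k)) : ℕ) : ℝ) :=
        Nat.cast_le.mpr h2
    _ = ((∑ k ∈ Finset.range (d * d + 1 + 1), (n * A * A * d).choose k : ℕ) : ℝ)
        * (((∑ k ∈ Finset.range (d + 1), (n * A * A).choose k : ℕ) : ℝ)
          * ((∑ k ∈ Finset.range (d + 1), (n * A * A).choose k : ℕ) : ℝ)) := by
        push_cast
        ring
    _ ≤ (81 * (n : ℝ) * (A : ℝ) ^ 2 / (d : ℝ)) ^ ((d + 1) ^ 2) :=
        growth_numeric d n A hd hn hA1 hdim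
end

section
/- Let d ≥ 1 be an integer, let μ > 0 and ν > 0, let W ∈ ℝ^{d×d} be symmetric positive definite, and let u ∈ ℝ^d with ‖u‖ ≤ 2. Set v = W u and define the matrix M ∈ ℝ^{d×d} by M = (v vᵀ)/‖v‖² if ‖v‖ ≥ μ and M = 0 otherwise. Then for every z ∈ ℝ^d with ‖z‖ ≤ 1, writing z̃ = Proj_{S(W,ν)}(z), one has |z̃ᵀ M z̃ − zᵀ M z| ≤ 4ν/μ. -/
open Matrix RealInnerProductSpace

/-!
Write `z = z̃ + w` with `z̃ = Pr z` and `w ⊥ S(W, ν)`. Every eigenvalue of `W` seen by `w` lies in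
`[0, ν)`, so `‖W w‖ ≤ ν ‖w‖ ≤ ν` and hence `|⟪v, w⟫| = |⟪u, W w⟫| ≤ 2ν`. If `‖v‖ ≥ μ`, the
quadratic form of `M` is `x ↦ ⟪v, x⟫² / ‖v‖²`, and with `|⟪v, z⟫|, |⟪v, z̃⟫| ≤ ‖v‖` we get
`|⟪v, z̃⟫² - ⟪v, z⟫²| ≤ 2ν · 2‖v‖`, i.e. a change of at most `4ν / ‖v‖ ≤ 4ν / μ`.
-/

/-- `spectralSubspace A c` is the linear subspace of `ℝ^d` spanned by the eigenvectors of
`A` whose eigenvalues are at least `c`. -/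
def spectralSubspace {d : ℕ} (A : Matrix (Fin d) (Fin d) ℝ) (c : ℝ) :
    Submodule ℝ (Fin d → ℝ) :=
  Submodule.span ℝ {v : Fin d → ℝ | ∃ μ : ℝ, c ≤ μ ∧ A *ᵥ v = μ • v}

/-- `IsOrthProjOnto P S` says that the matrix `P` is the orthogonal projection onto the
subspace `S`: every `P x` lies in `S` and `x - P x` is orthogonal to `S`. -/
def IsOrthProjOnto {d : ℕ} (P : Matrix (Fin d) (Fin d) ℝ)
    (S : Submodule ℝ (Fin d → ℝ)) : Prop :=
  (∀ x, P *ᵥ x ∈ S) ∧ ∀ x, ∀ s ∈ S, (x - P *ᵥ x) ⬝ᵥ s = 0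

section DotProduct

variable {n : Type*} [Fintype n]

theorem dotProduct_eq_inner_toLp (x y : n → ℝ) :
    x ⬝ᵥ y = ⟪WithLp.toLp 2 x, WithLp.toLp 2 y⟫ := by
  rw [EuclideanSpace.inner_toLp_toLp, star_trivial, dotProduct_comm]

theorem abs_dotProduct_le_sqrt_mul_sqrt (x y : n → ℝ) :
    |x ⬝ᵥ y| ≤ √(x ⬝ᵥ x) * √(y ⬝ᵥ y) := by
  simpa only [dotProduct_eq_inner_toLp, ← norm_eq_sqrt_real_inner] using
    abs_real_inner_le_norm _ _

theorem dotProduct_self_nonneg {R : Type*} [Ring R] [LinearOrder R] [IsStrictOrderedRing R]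
    (x : n → R) : 0 ≤ x ⬝ᵥ x :=
  Fintype.sum_nonneg fun _ => mul_self_nonneg _

theorem OrthonormalBasis.sum_sq_dotProduct (B : OrthonormalBasis n ℝ (EuclideanSpace ℝ n))
    (x : n → ℝ) : ∑ i, ((B i).ofLp ⬝ᵥ x) ^ 2 = x ⬝ᵥ x := by
  simp only [dotProduct_eq_inner_toLp, WithLp.toLp_ofLp, B.sum_sq_inner_right,
    real_inner_self_eq_norm_sq]

theorem Matrix.IsHermitian.mulVec_dotProduct_comm {W : Matrix n n ℝ} (hW : W.IsHermitian)
    (x y : n → ℝ) : (W *ᵥ x) ⬝ᵥ y = x ⬝ᵥ (W *ᵥ y) := by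
  rw [dotProduct_mulVec, ← mulVec_transpose, ← conjTranspose_eq_transpose_of_trivial, hW.eq,
    dotProduct_comm]

theorem dotProduct_smul_vecMulVec_mulVec (c : ℝ) (v x : n → ℝ) :
    x ⬝ᵥ ((c • vecMulVec v v) *ᵥ x) = c * (v ⬝ᵥ x) ^ 2 := by
  rw [smul_mulVec, vecMulVec_mulVec, dotProduct_smul, op_smul_eq_smul, dotProduct_smul,
    dotProduct_comm x v, smul_eq_mul, smul_eq_mul, sq]

theorem abs_sub_dotProduct_normalized_vecMulVec_mulVec_le {v x y : n → ℝ} {μ c : ℝ}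
    (hμ : 0 < μ) (hv : μ ≤ √(v ⬝ᵥ v)) (hx : √(x ⬝ᵥ x) ≤ 1) (hy : √(y ⬝ᵥ y) ≤ 1)
    (hxy : |v ⬝ᵥ (x - y)| ≤ c) :
    |x ⬝ᵥ (((v ⬝ᵥ v)⁻¹ • vecMulVec v v) *ᵥ x)
      - y ⬝ᵥ (((v ⬝ᵥ v)⁻¹ • vecMulVec v v) *ᵥ y)| ≤ 2 * c / μ := by
  set r := √(v ⬝ᵥ v)
  have hr : 0 < r := hμ.trans_le hv
  have hc : 0 ≤ c := (abs_nonneg _).trans hxy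
  have hvx : |v ⬝ᵥ x| ≤ r :=
    (abs_dotProduct_le_sqrt_mul_sqrt v x).trans (mul_le_of_le_one_right hr.le hx)
  have hvy : |v ⬝ᵥ y| ≤ r :=
    (abs_dotProduct_le_sqrt_mul_sqrt v y).trans (mul_le_of_le_one_right hr.le hy)
  have hsq : |(v ⬝ᵥ x) ^ 2 - (v ⬝ᵥ y) ^ 2| ≤ c * (2 * r) := by
    rw [sq_sub_sq, abs_mul, ← dotProduct_sub, mul_comm]
    have htri := abs_add_le (v ⬝ᵥ x) (v ⬝ᵥ y)
    gcongr
    linarith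
  rw [dotProduct_smul_vecMulVec_mulVec, dotProduct_smul_vecMulVec_mulVec, ← mul_sub,
    ← Real.sq_sqrt (dotProduct_self_nonneg v)]
  calc |(r ^ 2)⁻¹ * ((v ⬝ᵥ x) ^ 2 - (v ⬝ᵥ y) ^ 2)|
      = |(v ⬝ᵥ x) ^ 2 - (v ⬝ᵥ y) ^ 2| / r ^ 2 := by
        rw [abs_mul, abs_inv, abs_pow, abs_of_pos hr, inv_mul_eq_div]
    _ ≤ c * (2 * r) / r ^ 2 := by gcongr
    _ = 2 * c / r := by field_simp
    _ ≤ 2 * c / μ := by gcongr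

end DotProduct

namespace IsOrthProjOnto

variable {d : ℕ} {P : Matrix (Fin d) (Fin d) ℝ} {S : Submodule ℝ (Fin d → ℝ)}

theorem dotProduct_self_eq_add (hP : IsOrthProjOnto P S) (x : Fin d → ℝ) :
    x ⬝ᵥ x = (P *ᵥ x) ⬝ᵥ (P *ᵥ x) + (x - P *ᵥ x) ⬝ᵥ (x - P *ᵥ x) := by
  have h := hP.2 x _ (hP.1 x)
  conv_lhs => rw [← add_sub_cancel (P *ᵥ x) x]
  rw [add_dotProduct, dotProduct_add, dotProduct_add, dotProduct_comm (P *ᵥ x) (x - P *ᵥ x), h]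
  ring

theorem sqrt_dotProduct_self_mulVec_le (hP : IsOrthProjOnto P S) (x : Fin d → ℝ) :
    √((P *ᵥ x) ⬝ᵥ (P *ᵥ x)) ≤ √(x ⬝ᵥ x) := by
  gcongr
  linarith [hP.dotProduct_self_eq_add x, dotProduct_self_nonneg (x - P *ᵥ x)]

theorem sqrt_dotProduct_self_sub_mulVec_le (hP : IsOrthProjOnto P S) (x : Fin d → ℝ) :
    √((x - P *ᵥ x) ⬝ᵥ (x - P *ᵥ x)) ≤ √(x ⬝ᵥ x) := by
  gcongr
  linarith [hP.dotProduct_self_eq_add x, dotProduct_self_nonneg (P *ᵥ x)]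

end IsOrthProjOnto

theorem Matrix.PosSemidef.mulVec_dotProduct_self_le_of_orthogonal {d : ℕ}
    {W : Matrix (Fin d) (Fin d) ℝ} (hW : W.PosSemidef) {ν : ℝ} {w : Fin d → ℝ}
    (hw : ∀ s ∈ spectralSubspace W ν, w ⬝ᵥ s = 0) :
    (W *ᵥ w) ⬝ᵥ (W *ᵥ w) ≤ ν ^ 2 * (w ⬝ᵥ w) := by
  set B := hW.isHermitian.eigenvectorBasis
  set lam := hW.isHermitian.eigenvalues
  have coeff (i) : (B i).ofLp ⬝ᵥ (W *ᵥ w) = lam i * ((B i).ofLp ⬝ᵥ w) := by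
    rw [← hW.isHermitian.mulVec_dotProduct_comm, hW.isHermitian.mulVec_eigenvectorBasis,
      smul_dotProduct, smul_eq_mul]
  rw [← B.sum_sq_dotProduct, ← B.sum_sq_dotProduct w, Finset.mul_sum]
  refine Finset.sum_le_sum fun i _ => ?_
  rw [coeff, mul_pow]
  by_cases hi : ν ≤ lam i
  · have hBi : w ⬝ᵥ (B i).ofLp = 0 :=
      hw _ (Submodule.subset_span ⟨lam i, hi, hW.isHermitian.mulVec_eigenvectorBasis i⟩)
    simp [dotProduct_comm, hBi]
  · gcongr
    · exact hW.eigenvalues_nonneg i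
    · exact (not_le.mp hi).le

theorem projection_quadratic_form_stability_general {d : ℕ}
    (μ ν : ℝ) (hμ : 0 < μ) (hν : 0 < ν)
    (W : Matrix (Fin d) (Fin d) ℝ) (hW : W.PosDef)
    (u : Fin d → ℝ) (hu : Real.sqrt (u ⬝ᵥ u) ≤ 2)
    (v : Fin d → ℝ) (hv : v = W *ᵥ u)
    (M : Matrix (Fin d) (Fin d) ℝ)
    (hM : M = if μ ≤ Real.sqrt (v ⬝ᵥ v) then (v ⬝ᵥ v)⁻¹ • vecMulVec v v else 0)
    (Pr : Matrix (Fin d) (Fin d) ℝ) (hPr : IsOrthProjOnto Pr (spectralSubspace W ν))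
    (z : Fin d → ℝ) (hz : Real.sqrt (z ⬝ᵥ z) ≤ 1) :
    |(Pr *ᵥ z) ⬝ᵥ (M *ᵥ (Pr *ᵥ z)) - z ⬝ᵥ (M *ᵥ z)| ≤ 4 * ν / μ := by
  split_ifs at hM with hvμ
  · set w := z - Pr *ᵥ z
    have hWw : √((W *ᵥ w) ⬝ᵥ (W *ᵥ w)) ≤ ν :=
      calc √((W *ᵥ w) ⬝ᵥ (W *ᵥ w))
          ≤ √(ν ^ 2 * (w ⬝ᵥ w)) :=
            Real.sqrt_le_sqrt (hW.posSemidef.mulVec_dotProduct_self_le_of_orthogonal (hPr.2 z))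
        _ = ν * √(w ⬝ᵥ w) := by rw [Real.sqrt_mul (sq_nonneg ν), Real.sqrt_sq hν.le]
        _ ≤ ν :=
          mul_le_of_le_one_right hν.le ((hPr.sqrt_dotProduct_self_sub_mulVec_le z).trans hz)
    have hvw : |v ⬝ᵥ (Pr *ᵥ z - z)| ≤ 2 * ν := by
      rw [← neg_sub, dotProduct_neg, abs_neg, hv, hW.isHermitian.mulVec_dotProduct_comm]
      exact (abs_dotProduct_le_sqrt_mul_sqrt _ _).trans
        (mul_le_mul hu hWw (Real.sqrt_nonneg _) zero_le_two)
    rw [hM, show 4 * ν = 2 * (2 * ν) by ring]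
    exact abs_sub_dotProduct_normalized_vecMulVec_mulVec_le hμ hvμ
      ((hPr.sqrt_dotProduct_self_mulVec_le z).trans hz) hz hvw
  · simp only [hM, zero_mulVec, dotProduct_zero, sub_zero, abs_zero]
    positivity

/-- **Projection stability of the truncated rank-one direction matrix (Lemma `theM`).**
With `W` symmetric positive definite, `‖u‖ ≤ 2`, `v = W u`, and
`M = 1{‖v‖ ≥ μ} · v vᵀ / ‖v‖²`, projecting a unit vector `z` onto the span of the
eigenvectors of `W` with eigenvalue at least `ν` changes the quadratic form by at most
`4ν/μ`. -/
theorem projection_quadratic_form_stability {d : ℕ} (hd : 1 ≤ d)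
    (μ ν : ℝ) (hμ : 0 < μ) (hν : 0 < ν)
    (W : Matrix (Fin d) (Fin d) ℝ) (hW : W.PosDef)
    (u : Fin d → ℝ) (hu : Real.sqrt (u ⬝ᵥ u) ≤ 2)
    (v : Fin d → ℝ) (hv : v = W *ᵥ u)
    (M : Matrix (Fin d) (Fin d) ℝ)
    (hM : M = if μ ≤ Real.sqrt (v ⬝ᵥ v) then (v ⬝ᵥ v)⁻¹ • vecMulVec v v else 0)
    (Pr : Matrix (Fin d) (Fin d) ℝ) (hPr : IsOrthProjOnto Pr (spectralSubspace W ν))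
    (z : Fin d → ℝ) (hz : Real.sqrt (z ⬝ᵥ z) ≤ 1) :
    |(Pr *ᵥ z) ⬝ᵥ (M *ᵥ (Pr *ᵥ z)) - z ⬝ᵥ (M *ᵥ z)| ≤ 4 * ν / μ :=
  projection_quadratic_form_stability_general μ ν hμ hν W hW u hu v hv M hM Pr hPr z hz
end

section
/- Let d ≥ 1 be an integer and let ζ > 0, μ > 0, L > 0. Let W ∈ ℝ^{d×d} be symmetric positive definite, let c_1, …, c_m ∈ ℝ^d and ρ_1, …, ρ_m ≥ 0 with Σ_{i=1}^m ρ_i = 1, and set G = W^{-1}(Σ_{i=1}^m ρ_i c_i c_iᵀ)W^{-1}. Let u ∈ ℝ^d, set v = W u, let b ∈ ℝ with |b| ≤ L, and define F = b · (v vᵀ)/‖v‖² if ‖v‖ ≥ μ and F = 0 otherwise. Then for all z, y ∈ ℝ^d with ‖z‖ ≤ 1 and ‖y‖ ≤ 1: √ζ · μ · |(Proj_{S(G,ζ)} z)ᵀ F y| ≤ L · max_{1 ≤ i ≤ m} |⟨u, c_i⟩|. -/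
open Matrix

/-! Let `p` be the projection of `z`. Since `p` lies in the span of the eigenvectors of `G` with
eigenvalues `≥ ζ`, it is `p = G q` with `ζ ⟨q, p⟩ ≤ ‖p‖²`. With `M = ∑ ρ_i c_i c_iᵀ` and
`r = W⁻¹ q` one has `⟨p, W u⟩ = uᵀ M r` and `⟨q, p⟩ = rᵀ M r`, so Cauchy–Schwarz for the
positive semidefinite form `M` gives `ζ ⟨p, W u⟩² ≤ ‖p‖² · uᵀ M u ≤ max_i ⟨u, c_i⟩²`.
Finally `F` has rank one: `|pᵀ F y| ≤ |b| |⟨p, v⟩| / ‖v‖ ≤ L |⟨p, v⟩| / μ`. -/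

section DotProduct

variable {n : Type*} [Fintype n]

lemma dotProduct_self_nonneg_s8 (x : n → ℝ) : 0 ≤ x ⬝ᵥ x :=
  Finset.sum_nonneg fun _ _ => mul_self_nonneg _

lemma sq_dotProduct_le (x y : n → ℝ) : (x ⬝ᵥ y) ^ 2 ≤ (x ⬝ᵥ x) * (y ⬝ᵥ y) := by
  simpa only [dotProduct, sq] using Finset.sum_mul_sq_le_sq_mul_sq Finset.univ x y

lemma IsOrthProjOnto.dotProduct_self_le {d : ℕ} {P : Matrix (Fin d) (Fin d) ℝ}
    {S : Submodule ℝ (Fin d → ℝ)} (hP : IsOrthProjOnto P S) (x : Fin d → ℝ) :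
    (P *ᵥ x) ⬝ᵥ (P *ᵥ x) ≤ x ⬝ᵥ x := by
  set p := P *ᵥ x
  have horth : (x - p) ⬝ᵥ p = 0 := hP.2 x p (hP.1 x)
  have hsplit : x ⬝ᵥ x = (x - p) ⬝ᵥ (x - p) + 2 * ((x - p) ⬝ᵥ p) + p ⬝ᵥ p := by
    conv_lhs => rw [← sub_add_cancel x p]
    rw [add_dotProduct, dotProduct_add, dotProduct_add, dotProduct_comm p (x - p)]
    ring
  linarith [dotProduct_self_nonneg_s8 (x - p)]

lemma sq_dotProduct_smul_vecMulVec_self_mulVec_le (b : ℝ) (v x y : n → ℝ) :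
    (x ⬝ᵥ ((b * (v ⬝ᵥ v)⁻¹) • vecMulVec v v) *ᵥ y) ^ 2 * (v ⬝ᵥ v) ≤
      b ^ 2 * (x ⬝ᵥ v) ^ 2 * (y ⬝ᵥ y) := by
  rw [smul_mulVec, vecMulVec_mulVec, op_smul_eq_smul, dotProduct_smul, dotProduct_smul,
    smul_eq_mul, smul_eq_mul]
  rcases (dotProduct_self_nonneg_s8 v).eq_or_lt with hv | hv
  · rw [← hv, mul_zero]
    exact mul_nonneg (by positivity) (dotProduct_self_nonneg_s8 y)
  · have hCS := sq_dotProduct_le v y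
    calc (b * (v ⬝ᵥ v)⁻¹ * ((v ⬝ᵥ y) * (x ⬝ᵥ v))) ^ 2 * (v ⬝ᵥ v)
        = b ^ 2 * (x ⬝ᵥ v) ^ 2 * ((v ⬝ᵥ y) ^ 2 / (v ⬝ᵥ v)) := by field_simp
      _ ≤ b ^ 2 * (x ⬝ᵥ v) ^ 2 * (y ⬝ᵥ y) := by
        gcongr
        rwa [div_le_iff₀' hv]

lemma mul_sq_dotProduct_smul_vecMulVec_self_mulVec_le {μ b L : ℝ} {v y : n → ℝ}
    (hμv : μ ^ 2 ≤ v ⬝ᵥ v) (hb : |b| ≤ L) (hy : y ⬝ᵥ y ≤ 1) (x : n → ℝ) :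
    μ ^ 2 * (x ⬝ᵥ ((b * (v ⬝ᵥ v)⁻¹) • vecMulVec v v) *ᵥ y) ^ 2 ≤ L ^ 2 * (x ⬝ᵥ v) ^ 2 := by
  have hbL : b ^ 2 ≤ L ^ 2 := by
    rw [← sq_abs]
    exact pow_le_pow_left₀ (abs_nonneg b) hb 2
  calc μ ^ 2 * (x ⬝ᵥ ((b * (v ⬝ᵥ v)⁻¹) • vecMulVec v v) *ᵥ y) ^ 2
      ≤ (x ⬝ᵥ ((b * (v ⬝ᵥ v)⁻¹) • vecMulVec v v) *ᵥ y) ^ 2 * (v ⬝ᵥ v) := by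
        rw [mul_comm]
        gcongr
    _ ≤ b ^ 2 * (x ⬝ᵥ v) ^ 2 * (y ⬝ᵥ y) := sq_dotProduct_smul_vecMulVec_self_mulVec_le b v x y
    _ ≤ L ^ 2 * (x ⬝ᵥ v) ^ 2 * 1 := by
        gcongr
        exact dotProduct_self_nonneg_s8 y
    _ = L ^ 2 * (x ⬝ᵥ v) ^ 2 := mul_one _

end DotProduct

lemma isSymm_sum_smul_vecMulVec {ι n : Type*} [Fintype ι] (ρ : ι → ℝ) (c : ι → n → ℝ) :
    (∑ i, ρ i • vecMulVec (c i) (c i)).IsSymm :=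
  IsSymm.ext fun i j => by
    simp only [Matrix.sum_apply, Matrix.smul_apply, vecMulVec_apply, mul_comm]

section Gram

variable {ι n : Type*} [Fintype ι] [Fintype n]

lemma dotProduct_sum_smul_vecMulVec_mulVec (ρ : ι → ℝ) (c : ι → n → ℝ) (x y : n → ℝ) :
    x ⬝ᵥ (∑ i, ρ i • vecMulVec (c i) (c i)) *ᵥ y = ∑ i, ρ i * ((c i ⬝ᵥ x) * (c i ⬝ᵥ y)) := by
  simp only [Matrix.sum_mulVec, smul_mulVec, vecMulVec_mulVec, op_smul_eq_smul, dotProduct_sum,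
    dotProduct_smul, smul_eq_mul]
  exact Finset.sum_congr rfl fun i _ => by rw [dotProduct_comm x]; ring

lemma sq_dotProduct_sum_smul_vecMulVec_mulVec_le {ρ : ι → ℝ} (hρ : ∀ i, 0 ≤ ρ i) (c : ι → n → ℝ)
    (x y : n → ℝ) :
    (x ⬝ᵥ (∑ i, ρ i • vecMulVec (c i) (c i)) *ᵥ y) ^ 2 ≤
      (x ⬝ᵥ (∑ i, ρ i • vecMulVec (c i) (c i)) *ᵥ x) *
        (y ⬝ᵥ (∑ i, ρ i • vecMulVec (c i) (c i)) *ᵥ y) := by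
  simp only [dotProduct_sum_smul_vecMulVec_mulVec]
  refine Finset.sum_sq_le_sum_mul_sum_of_sq_le_mul _ (fun i _ => ?_) (fun i _ => ?_)
    (fun i _ => le_of_eq (by ring))
  · exact mul_nonneg (hρ i) (mul_self_nonneg _)
  · exact mul_nonneg (hρ i) (mul_self_nonneg _)

lemma dotProduct_sum_smul_vecMulVec_mulVec_self_nonneg {ρ : ι → ℝ} (hρ : ∀ i, 0 ≤ ρ i)
    (c : ι → n → ℝ) (x : n → ℝ) :
    0 ≤ x ⬝ᵥ (∑ i, ρ i • vecMulVec (c i) (c i)) *ᵥ x := by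
  rw [dotProduct_sum_smul_vecMulVec_mulVec]
  exact Finset.sum_nonneg fun i _ => mul_nonneg (hρ i) (mul_self_nonneg _)

lemma dotProduct_sum_smul_vecMulVec_mulVec_self_le {ρ : ι → ℝ} (hρ : ∀ i, 0 ≤ ρ i)
    (hρsum : ∑ i, ρ i = 1) {c : ι → n → ℝ} {x : n → ℝ} {K : ℝ} (hK : ∀ i, |x ⬝ᵥ c i| ≤ K) :
    x ⬝ᵥ (∑ i, ρ i • vecMulVec (c i) (c i)) *ᵥ x ≤ K ^ 2 := by
  rw [dotProduct_sum_smul_vecMulVec_mulVec]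
  calc ∑ i, ρ i * ((c i ⬝ᵥ x) * (c i ⬝ᵥ x)) ≤ ∑ i, ρ i * K ^ 2 := by
        refine Finset.sum_le_sum fun i _ => mul_le_mul_of_nonneg_left ?_ (hρ i)
        rw [← sq, ← sq_abs, dotProduct_comm]
        exact pow_le_pow_left₀ (abs_nonneg _) (hK i) 2
    _ = K ^ 2 := by rw [← Finset.sum_mul, hρsum, one_mul]

end Gram

section Congruence

variable {n R : Type*} [Fintype n] [DecidableEq n] [CommRing R] {W M : Matrix n n R}

lemma Matrix.IsSymm.inv_mul_mul_inv (hW : W.IsSymm) (hM : M.IsSymm) :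
    (W⁻¹ * M * W⁻¹).IsSymm := by
  rw [IsSymm, transpose_mul, transpose_mul, transpose_nonsing_inv, hW.eq, hM.eq, mul_assoc]

lemma dotProduct_inv_mul_mul_inv_mulVec (hW : W.IsSymm) (x y : n → R) :
    x ⬝ᵥ (W⁻¹ * M * W⁻¹) *ᵥ y = (W⁻¹ *ᵥ x) ⬝ᵥ M *ᵥ (W⁻¹ *ᵥ y) := by
  have hWinv : (W⁻¹)ᵀ = W⁻¹ := by rw [transpose_nonsing_inv, hW.eq]
  rw [← mulVec_mulVec, ← mulVec_mulVec, ← hWinv, dotProduct_transpose_mulVec, dotProduct_comm,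
    hWinv]

end Congruence

section Spectral

variable {d : ℕ} {G : Matrix (Fin d) (Fin d) ℝ} {ζ : ℝ}

lemma dotProduct_eq_zero_of_mem_spectralSubspace (hG : G.IsSymm) {e : Fin d → ℝ} {ν : ℝ}
    (he : G *ᵥ e = ν • e) (hν : ν < ζ) {x : Fin d → ℝ} (hx : x ∈ spectralSubspace G ζ) :
    e ⬝ᵥ x = 0 := by
  induction hx using Submodule.span_induction with
  | mem w hw =>
    obtain ⟨κ, hκ, hw⟩ := hw
    have h : κ * (e ⬝ᵥ w) = ν * (e ⬝ᵥ w) := calc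
      κ * (e ⬝ᵥ w) = e ⬝ᵥ Gᵀ *ᵥ w := by rw [hG.eq, hw, dotProduct_smul, smul_eq_mul]
      _ = ν * (e ⬝ᵥ w) := by
        rw [dotProduct_transpose_mulVec, he, dotProduct_smul, smul_eq_mul, dotProduct_comm]
    by_contra hew
    exact (hν.trans_le hκ).ne' (mul_right_cancel₀ hew h)
  | zero => exact dotProduct_zero e
  | add x y _ _ hx hy => rw [dotProduct_add, hx, hy, add_zero]
  | smul a x _ hx => rw [dotProduct_smul, hx, smul_zero]

lemma exists_mulVec_eq_of_mem_spectralSubspace (hG : G.IsHermitian) (hζ : 0 < ζ)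
    {p : Fin d → ℝ} (hp : p ∈ spectralSubspace G ζ) :
    ∃ q, G *ᵥ q = p ∧ ζ * (q ⬝ᵥ p) ≤ p ⬝ᵥ p := by
  set e : Fin d → Fin d → ℝ := fun j => hG.eigenvectorBasis j
  set ν := hG.eigenvalues
  set a : Fin d → ℝ := fun j => e j ⬝ᵥ p
  have hexp : ∑ j, a j • e j = p := by
    simpa [a, e, EuclideanSpace.inner_eq_star_dotProduct, dotProduct_comm] using
      congrArg WithLp.ofLp (hG.eigenvectorBasis.sum_repr' (WithLp.toLp 2 p))
  have hlarge : ∀ j, a j ≠ 0 → ζ ≤ ν j := fun j ha => not_lt.1 fun hlt =>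
    ha (dotProduct_eq_zero_of_mem_spectralSubspace (isHermitian_iff_isSymm.1 hG)
      (hG.mulVec_eigenvectorBasis j) hlt hp)
  -- `G` inverted on the eigenvalues `≥ ζ`; the other coefficients `a j` vanish, so the junk
  -- value `0⁻¹ = 0` never matters.
  refine ⟨∑ j, ((ν j)⁻¹ * a j) • e j, ?_, ?_⟩
  · conv_rhs => rw [← hexp]
    refine (mulVec_sum _ _ _).trans (Finset.sum_congr rfl fun j _ => ?_)
    rw [mulVec_smul, hG.mulVec_eigenvectorBasis j, smul_smul]
    by_cases ha : a j = 0
    · simp [ha]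
    · have hν : ν j ≠ 0 := (hζ.trans_le (hlarge j ha)).ne'
      congr 1
      change (ν j)⁻¹ * a j * ν j = a j
      field_simp
  · have hpp : p ⬝ᵥ p = ∑ j, a j * a j := by
      conv_lhs => arg 1; rw [← hexp]
      simp only [sum_dotProduct, smul_dotProduct, smul_eq_mul]
      rfl
    rw [hpp, sum_dotProduct, Finset.mul_sum]
    refine Finset.sum_le_sum fun j _ => ?_
    rw [smul_dotProduct, smul_eq_mul]
    by_cases ha : a j = 0
    · simp [ha]
    · have hν : 0 < ν j := hζ.trans_le (hlarge j ha)
      have hratio : ζ * (ν j)⁻¹ ≤ 1 := by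
        rw [← div_eq_mul_inv]
        exact (div_le_one hν).2 (hlarge j ha)
      calc ζ * ((ν j)⁻¹ * a j * a j) = ζ * (ν j)⁻¹ * (a j * a j) := by ring
        _ ≤ a j * a j := mul_le_of_le_one_left (mul_self_nonneg _) hratio

end Spectral

lemma mul_sq_dotProduct_mulVec_le_of_mem_spectralSubspace {ι : Type*} [Fintype ι] {d : ℕ}
    {ζ K : ℝ} (hζ : 0 < ζ) {W : Matrix (Fin d) (Fin d) ℝ} (hW : W.PosDef)
    {ρ : ι → ℝ} (hρ : ∀ i, 0 ≤ ρ i) (hρsum : ∑ i, ρ i = 1) {c : ι → Fin d → ℝ}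
    {u : Fin d → ℝ} (hK : ∀ i, |u ⬝ᵥ c i| ≤ K) {p : Fin d → ℝ}
    (hp : p ∈ spectralSubspace (W⁻¹ * (∑ i, ρ i • vecMulVec (c i) (c i)) * W⁻¹) ζ) :
    ζ * (p ⬝ᵥ W *ᵥ u) ^ 2 ≤ (p ⬝ᵥ p) * K ^ 2 := by
  set M := ∑ i, ρ i • vecMulVec (c i) (c i)
  have hWs : W.IsSymm := isHermitian_iff_isSymm.1 hW.isHermitian
  have hG : (W⁻¹ * M * W⁻¹).IsHermitian :=
    isHermitian_iff_isSymm.2 (hWs.inv_mul_mul_inv (isSymm_sum_smul_vecMulVec ρ c))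
  obtain ⟨q, hGq, hqp⟩ := exists_mulVec_eq_of_mem_spectralSubspace hG hζ hp
  set r := W⁻¹ *ᵥ q
  have hpv : p ⬝ᵥ W *ᵥ u = u ⬝ᵥ M *ᵥ r := by
    rw [← hGq, dotProduct_comm, dotProduct_inv_mul_mul_inv_mulVec hWs, mulVec_mulVec,
      nonsing_inv_mul W hW.det_pos.ne'.isUnit, one_mulVec]
  have hqp' : q ⬝ᵥ p = r ⬝ᵥ M *ᵥ r := by
    rw [← hGq, dotProduct_inv_mul_mul_inv_mulVec hWs]
  have hrr := dotProduct_sum_smul_vecMulVec_mulVec_self_nonneg hρ c r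
  calc ζ * (p ⬝ᵥ W *ᵥ u) ^ 2 ≤ ζ * ((u ⬝ᵥ M *ᵥ u) * (r ⬝ᵥ M *ᵥ r)) := by
        rw [hpv]
        gcongr
        exact sq_dotProduct_sum_smul_vecMulVec_mulVec_le hρ c u r
    _ = (u ⬝ᵥ M *ᵥ u) * (ζ * (q ⬝ᵥ p)) := by rw [hqp']; ring
    _ ≤ K ^ 2 * (p ⬝ᵥ p) :=
        mul_le_mul (dotProduct_sum_smul_vecMulVec_mulVec_self_le hρ hρsum hK) hqp
          (hqp' ▸ mul_nonneg hζ.le hrr) (sq_nonneg K)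
    _ = (p ⬝ᵥ p) * K ^ 2 := mul_comm _ _

theorem dual_admissibility_general {d m : ℕ}
    (ζ μ L : ℝ) (hζ : 0 < ζ) (hμ : 0 < μ)
    (W : Matrix (Fin d) (Fin d) ℝ) (hW : W.PosDef)
    (c : Fin m → Fin d → ℝ) (ρ : Fin m → ℝ)
    (hρ : ∀ i, 0 ≤ ρ i) (hρsum : ∑ i, ρ i = 1)
    (G : Matrix (Fin d) (Fin d) ℝ)
    (hG : G = W⁻¹ * (∑ i, ρ i • vecMulVec (c i) (c i)) * W⁻¹)
    (u v : Fin d → ℝ) (hv : v = W *ᵥ u)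
    (b : ℝ) (hb : |b| ≤ L)
    (F : Matrix (Fin d) (Fin d) ℝ)
    (hF : F = if μ ≤ Real.sqrt (v ⬝ᵥ v)
      then (b * (v ⬝ᵥ v)⁻¹) • vecMulVec v v else 0)
    (Pr : Matrix (Fin d) (Fin d) ℝ) (hPr : IsOrthProjOnto Pr (spectralSubspace G ζ))
    (z y : Fin d → ℝ) (hz : Real.sqrt (z ⬝ᵥ z) ≤ 1) (hy : Real.sqrt (y ⬝ᵥ y) ≤ 1) :
    Real.sqrt ζ * μ * |(Pr *ᵥ z) ⬝ᵥ (F *ᵥ y)| ≤ L * ⨆ i, |u ⬝ᵥ c i| := by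
  set K := ⨆ i, |u ⬝ᵥ c i|
  have hK : ∀ i, |u ⬝ᵥ c i| ≤ K := le_ciSup (Set.finite_range _).bddAbove
  have hLK : 0 ≤ L * K :=
    mul_nonneg ((abs_nonneg b).trans hb) (Real.iSup_nonneg fun i => abs_nonneg _)
  split_ifs at hF with hvμ
  swap
  · simpa [hF] using hLK
  subst hF
  set p := Pr *ᵥ z
  have hpp : p ⬝ᵥ p ≤ 1 := (hPr.dotProduct_self_le z).trans (Real.sqrt_le_one.1 hz)
  have hpF := mul_sq_dotProduct_smul_vecMulVec_self_mulVec_le ((Real.le_sqrt' hμ).1 hvμ) hb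
    (Real.sqrt_le_one.1 hy) p
  have hpv : ζ * (p ⬝ᵥ v) ^ 2 ≤ (p ⬝ᵥ p) * K ^ 2 := hv ▸
    mul_sq_dotProduct_mulVec_le_of_mem_spectralSubspace hζ hW hρ hρsum hK (hG ▸ hPr.1 z)
  refine (pow_le_pow_iff_left₀ (by positivity) hLK two_ne_zero).1 ?_
  rw [mul_pow, mul_pow, Real.sq_sqrt hζ.le, sq_abs, mul_assoc]
  calc ζ * (μ ^ 2 * (p ⬝ᵥ ((b * (v ⬝ᵥ v)⁻¹) • vecMulVec v v) *ᵥ y) ^ 2)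
      ≤ ζ * (L ^ 2 * (p ⬝ᵥ v) ^ 2) := mul_le_mul_of_nonneg_left hpF hζ.le
    _ = L ^ 2 * (ζ * (p ⬝ᵥ v) ^ 2) := by ring
    _ ≤ L ^ 2 * K ^ 2 := mul_le_mul_of_nonneg_left
        (hpv.trans (mul_le_of_le_one_left (sq_nonneg K) hpp)) (sq_nonneg L)
    _ = (L * K) ^ 2 := (mul_pow L K 2).symm

/-- **Abstract dual-admissibility lemma.**  Let `W` be symmetric positive definite,
`G = W⁻¹ (∑ i, ρ_i c_i c_iᵀ) W⁻¹` with nonnegative weights `ρ` summing to `1`, let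
`v = W u`, `|b| ≤ L`, and `F = 1{‖v‖ ≥ μ} · b · v vᵀ / ‖v‖²`.  Then for all unit vectors
`z, y`:  `√ζ · μ · |(Proj_{S(G,ζ)} z)ᵀ F y| ≤ L · max_i |⟨u, c_i⟩|`. -/
theorem dual_admissibility {d m : ℕ} (hd : 1 ≤ d) (hm : 1 ≤ m)
    (ζ μ L : ℝ) (hζ : 0 < ζ) (hμ : 0 < μ) (hL : 0 < L)
    (W : Matrix (Fin d) (Fin d) ℝ) (hW : W.PosDef)
    (c : Fin m → Fin d → ℝ) (ρ : Fin m → ℝ)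
    (hρ : ∀ i, 0 ≤ ρ i) (hρsum : ∑ i, ρ i = 1)
    (G : Matrix (Fin d) (Fin d) ℝ)
    (hG : G = W⁻¹ * (∑ i, ρ i • vecMulVec (c i) (c i)) * W⁻¹)
    (u v : Fin d → ℝ) (hv : v = W *ᵥ u)
    (b : ℝ) (hb : |b| ≤ L)
    (F : Matrix (Fin d) (Fin d) ℝ)
    (hF : F = if μ ≤ Real.sqrt (v ⬝ᵥ v)
      then (b * (v ⬝ᵥ v)⁻¹) • vecMulVec v v else 0)
    (Pr : Matrix (Fin d) (Fin d) ℝ) (hPr : IsOrthProjOnto Pr (spectralSubspace G ζ))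
    (z y : Fin d → ℝ) (hz : Real.sqrt (z ⬝ᵥ z) ≤ 1) (hy : Real.sqrt (y ⬝ᵥ y) ≤ 1) :
    Real.sqrt ζ * μ * |(Pr *ᵥ z) ⬝ᵥ (F *ᵥ y)| ≤ L * ⨆ i, |u ⬝ᵥ c i| :=
  dual_admissibility_general ζ μ L hζ hμ W hW c ρ hρ hρsum G hG u v hv b hb F hF Pr hPr z y hz hy
end

section
/- Let d ≥ 1 and m ≥ 0 be integers, let β > 0, and let θ, x, u_1, …, u_m ∈ ℝ^d. Set A = β I + Σ_{k=1}^m u_k u_kᵀ. Then |θᵀ x| ≤ ‖x‖_{A^{-1}} · ( √β · ‖θ‖ + √d · Σ_{k=1}^m |θᵀ u_k| ), where ‖x‖_{A^{-1}} = √(xᵀ A^{-1} x). -/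
/-!
Cauchy–Schwarz for the inner product `⟨v, w⟩_A = vᵀ A w`, applied to `A⁻¹ x` and `θ`, gives
`|θᵀ x| ≤ ‖x‖_{A⁻¹} ‖θ‖_A`. Expanding `A` yields `‖θ‖_A² = β ‖θ‖² + ∑ k, (θᵀ u_k)²`, and the
Euclidean norm of the vector `(√β ‖θ‖, θᵀ u_1, …, θᵀ u_m)` is at most its `ℓ¹` norm.
-/

open Matrix

namespace Matrix

variable {n ι : Type*} [Fintype n]

theorem dotProduct_vecMulVec_self_mulVec {R : Type*} [CommSemiring R] (v w : n → R) :
    w ⬝ᵥ vecMulVec v v *ᵥ w = (w ⬝ᵥ v) ^ 2 := by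
  rw [vecMulVec_mulVec, op_smul_eq_smul, dotProduct_smul, smul_eq_mul, dotProduct_comm v, sq]

theorem dotProduct_smul_one_add_sum_vecMulVec_mulVec {R : Type*} [CommRing R] [DecidableEq n]
    (β : R) (s : Finset ι) (u : ι → n → R) (θ : n → R) :
    θ ⬝ᵥ (β • 1 + ∑ k ∈ s, vecMulVec (u k) (u k)) *ᵥ θ =
      β * (θ ⬝ᵥ θ) + ∑ k ∈ s, (θ ⬝ᵥ u k) ^ 2 := by
  simp only [add_mulVec, smul_mulVec, one_mulVec, sum_mulVec, dotProduct_add, dotProduct_smul,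
    dotProduct_sum, dotProduct_vecMulVec_self_mulVec, smul_eq_mul]

theorem posDef_smul_one_add_sum_vecMulVec [DecidableEq n] {β : ℝ} (hβ : 0 < β)
    (s : Finset ι) (u : ι → n → ℝ) :
    (β • 1 + ∑ k ∈ s, vecMulVec (u k) (u k)).PosDef :=
  (PosDef.one.smul hβ).add_posSemidef <|
    posSemidef_sum s fun k _ => by simpa using posSemidef_vecMulVec_self_star (u k)

theorem IsSymm.dotProduct_mulVec_comm {R : Type*} [CommSemiring R] {M : Matrix n n R}
    (hM : M.IsSymm) (v w : n → R) : v ⬝ᵥ M *ᵥ w = w ⬝ᵥ M *ᵥ v := by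
  rw [dotProduct_mulVec, ← mulVec_transpose, hM.eq, dotProduct_comm]

theorem PosSemidef.dotProduct_mulVec_sq_le {M : Matrix n n ℝ} (hM : M.PosSemidef) (v w : n → ℝ) :
    (v ⬝ᵥ M *ᵥ w) ^ 2 ≤ (v ⬝ᵥ M *ᵥ v) * (w ⬝ᵥ M *ᵥ w) := by
  classical
  have hsymm : M.IsSymm := by simpa using hM.isHermitian
  rw [sq]
  nth_rw 2 [hsymm.dotProduct_mulVec_comm]
  simpa only [toBilin'_apply'] using (toBilin' M).apply_mul_apply_le_of_forall_zero_le
    (fun x => by simpa [toBilin'_apply'] using hM.dotProduct_mulVec_nonneg x) v w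

theorem PosDef.sq_dotProduct_le [DecidableEq n] {A : Matrix n n ℝ} (hA : A.PosDef) (θ x : n → ℝ) :
    (θ ⬝ᵥ x) ^ 2 ≤ (x ⬝ᵥ A⁻¹ *ᵥ x) * (θ ⬝ᵥ A *ᵥ θ) := by
  have hsymm : A.IsSymm := by simpa using hA.isHermitian
  have hx : A *ᵥ A⁻¹ *ᵥ x = x := by
    rw [mulVec_mulVec, mul_nonsing_inv _ (A.isUnit_iff_isUnit_det.mp hA.isUnit), one_mulVec]
  have hcross : A⁻¹ *ᵥ x ⬝ᵥ A *ᵥ θ = θ ⬝ᵥ x := by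
    rw [hsymm.dotProduct_mulVec_comm, hx]
  have hnorm : A⁻¹ *ᵥ x ⬝ᵥ A *ᵥ A⁻¹ *ᵥ x = x ⬝ᵥ A⁻¹ *ᵥ x := by
    rw [hx, dotProduct_comm]
  simpa only [hcross, hnorm] using hA.posSemidef.dotProduct_mulVec_sq_le (A⁻¹ *ᵥ x) θ

end Matrix

theorem Real.sqrt_add_sum_sq_le {ι : Type*} {a : ℝ} (ha : 0 ≤ a) (s : Finset ι) (b : ι → ℝ) :
    √(a + ∑ k ∈ s, b k ^ 2) ≤ √a + ∑ k ∈ s, |b k| := by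
  have hb : ∑ k ∈ s, b k ^ 2 ≤ (∑ k ∈ s, |b k|) ^ 2 := by
    simpa only [sq_abs] using Finset.sum_sq_le_sq_sum_of_nonneg (fun k _ => abs_nonneg (b k))
  have hS : 0 ≤ ∑ k ∈ s, |b k| := Finset.sum_nonneg fun k _ => abs_nonneg (b k)
  rw [Real.sqrt_le_left (by positivity)]
  nlinarith [Real.sq_sqrt ha, Real.sqrt_nonneg a]

/-- **Deterministic core of the change-of-measure lemma.**
With `A = β I + ∑ k, u_k u_kᵀ`, for all `θ, x ∈ ℝ^d`:
`|θᵀ x| ≤ ‖x‖_{A⁻¹} · (√β ‖θ‖ + √d · ∑ k |θᵀ u_k|)`. -/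
theorem change_of_measure {d m : ℕ} (hd : 1 ≤ d) (β : ℝ) (hβ : 0 < β)
    (θ x : Fin d → ℝ) (u : Fin m → Fin d → ℝ)
    (A : Matrix (Fin d) (Fin d) ℝ)
    (hA : A = β • (1 : Matrix (Fin d) (Fin d) ℝ) + ∑ k, vecMulVec (u k) (u k)) :
    |θ ⬝ᵥ x| ≤ Real.sqrt (x ⬝ᵥ (A⁻¹ *ᵥ x)) *
      (Real.sqrt β * Real.sqrt (θ ⬝ᵥ θ) + Real.sqrt (d : ℝ) * ∑ k, |θ ⬝ᵥ u k|) := by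
  have hApd : A.PosDef := hA ▸ posDef_smul_one_add_sum_vecMulVec hβ _ u
  have hx : 0 ≤ x ⬝ᵥ A⁻¹ *ᵥ x := by simpa using hApd.inv.posSemidef.dotProduct_mulVec_nonneg x
  have hθθ : 0 ≤ θ ⬝ᵥ θ := by simpa using dotProduct_star_self_nonneg θ
  have hsum : 0 ≤ ∑ k, |θ ⬝ᵥ u k| := Finset.sum_nonneg fun k _ => abs_nonneg _
  have hd' : 1 ≤ √(d : ℝ) := Real.one_le_sqrt.mpr (mod_cast hd)
  calc |θ ⬝ᵥ x| ≤ √(x ⬝ᵥ A⁻¹ *ᵥ x) * √(θ ⬝ᵥ A *ᵥ θ) := by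
        rw [← Real.sqrt_mul hx]
        exact Real.abs_le_sqrt (hApd.sq_dotProduct_le θ x)
    _ = √(x ⬝ᵥ A⁻¹ *ᵥ x) * √(β * (θ ⬝ᵥ θ) + ∑ k, (θ ⬝ᵥ u k) ^ 2) := by
        rw [hA, dotProduct_smul_one_add_sum_vecMulVec_mulVec]
    _ ≤ √(x ⬝ᵥ A⁻¹ *ᵥ x) * (√β * √(θ ⬝ᵥ θ) + ∑ k, |θ ⬝ᵥ u k|) := by
        rw [← Real.sqrt_mul hβ.le]
        gcongr
        exact Real.sqrt_add_sum_sq_le (by positivity) _ _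
    _ ≤ _ := by
        gcongr
        exact le_mul_of_one_le_left hsum hd'
end

section
/- Let n ≥ 1 be an integer and B > 0, and let J ⊆ ℝ^n be a finite nonempty set with r = max_{x ∈ J} ‖x‖ (Euclidean norm). On a probability space, let σ_1, …, σ_n, w_1, …, w_n be mutually independent random variables such that each σ_i is uniform on {−1, 1} (Rademacher) and each w_i takes values in [−B, B] almost surely. Then E[ max_{x ∈ J} Σ_{i=1}^n σ_i · x_i · w_i ] ≤ r B √(2 log |J|). -/
/-!
Each `σᵢ wᵢ` is centred (`σᵢ` is symmetric and independent of `wᵢ`) and takes values in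
`[-B, B]`, so by Hoeffding's lemma it is sub-Gaussian with variance proxy `B²`. The pairs
`(σᵢ, wᵢ)` are independent, hence `∑ σᵢ xᵢ wᵢ` is sub-Gaussian with proxy `‖x‖² B² ≤ r² B²`.
For sub-Gaussian `Yₓ` with proxy `c`, Jensen's inequality and the bound
`exp (t max Yₓ) ≤ ∑ exp (t Yₓ)` give `t E[max Yₓ] ≤ log |J| + c t² / 2` for all `t > 0`, and
optimising in `t` yields `E[max Yₓ] ≤ √(2 c log |J|)`.
-/

open Matrix MeasureTheory ProbabilityTheory ENNReal
open scoped NNReal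
open Finset Filter Topology

lemma le_sqrt_of_forall_mul_le_add_sq {I a b : ℝ} (ha : 0 ≤ a) (hb : 0 ≤ b)
    (h : ∀ t > 0, t * I ≤ a + t ^ 2 * b / 2) : I ≤ √(2 * a * b) := by
  -- The optimal `t` is `√(2ab) / b`; perturbing `a` and `b` avoids the degenerate cases.
  have hpos_case {a' b' : ℝ} (haa' : a ≤ a') (hbb' : b ≤ b') (ha' : 0 < a') (hb' : 0 < b') :
      I ≤ √(2 * a' * b') := by
    set s := √(2 * a' * b')
    have hs : 0 < s := by positivity
    have hs2 : s ^ 2 = 2 * a' * b' := Real.sq_sqrt (by positivity)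
    have ht : 0 < s / b' := by positivity
    refine le_of_mul_le_mul_left ?_ ht
    calc s / b' * I ≤ a + (s / b') ^ 2 * b / 2 := h _ ht
      _ ≤ a' + (s / b') ^ 2 * b' / 2 := by gcongr
      _ = s / b' * s := by field_simp; rw [hs2]; ring
  have hlim : Tendsto (fun ε ↦ √(2 * (a + ε) * (b + ε))) (𝓝[>] 0) (𝓝 √(2 * a * b)) := by
    have hcont : Continuous fun ε : ℝ ↦ √(2 * (a + ε) * (b + ε)) := by fun_prop
    simpa using (hcont.tendsto 0).mono_left nhdsWithin_le_nhds
  refine ge_of_tendsto hlim (eventually_nhdsWithin_of_forall fun ε (hε : 0 < ε) ↦ ?_)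
  exact hpos_case (by linarith) (by linarith) (by linarith) (by linarith)

namespace ProbabilityTheory

variable {Ω : Type*} [MeasurableSpace Ω] {P : Measure Ω}

section Blocks

variable {ι κ 𝓧 : Type*} [MeasurableSpace 𝓧]

lemma iIndepFun.curry {X : ι × κ → Ω → 𝓧} (hX : ∀ p, Measurable (X p)) (h : iIndepFun X P) :
    iIndepFun (fun i ω j ↦ X (i, j) ω) P := by
  have := h.isProbabilityMeasure
  have (p : ι × κ) : IsProbabilityMeasure (P.map (X p)) :=
    Measure.isProbabilityMeasure_map (hX p).aemeasurable
  have hblock (i : ι) :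
      P.map (fun ω j ↦ X (i, j) ω) = Measure.infinitePi fun j ↦ P.map (X (i, j)) :=
    (h.precomp (Prod.mk_right_injective i)).map_fun_eq_infinitePi_map fun j ↦ hX (i, j)
  rw [iIndepFun_iff_map_fun_eq_infinitePi_map fun i ↦ measurable_pi_lambda _ fun j ↦ hX (i, j)]
  simp_rw [hblock]
  rw [← Measure.infinitePi_map_curry, ← h.map_fun_eq_infinitePi_map hX,
    Measure.map_map (by fun_prop) (measurable_pi_lambda _ hX)]
  rfl

lemma iIndepFun.prodMk_of_sumElim {X Y : ι → Ω → 𝓧} (hX : ∀ i, Measurable (X i))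
    (hY : ∀ i, Measurable (Y i)) (h : iIndepFun (Sum.elim X Y) P) :
    iIndepFun (fun i ω ↦ (X i ω, Y i ω)) P := by
  have hpairs := (h.precomp ((Equiv.prodComm ι Bool).trans
    (Equiv.boolProdEquivSum ι)).injective).curry fun p ↦ by
      rcases p with ⟨i, _ | _⟩
      exacts [hX i, hY i]
  exact hpairs.comp (fun _ v ↦ (v false, v true)) fun _ ↦ by fun_prop

end Blocks

lemma HasSubgaussianMGF.mono {X : Ω → ℝ} {c c' : ℝ≥0} (h : HasSubgaussianMGF X c P)
    (hc : c ≤ c') : HasSubgaussianMGF X c' P where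
  integrable_exp_mul := h.integrable_exp_mul
  mgf_le t := (h.mgf_le t).trans (Real.exp_le_exp.2 (by gcongr))

noncomputable def rademacher : Measure ℝ :=
  ((1 : ℝ≥0∞) / 2) • Measure.dirac (1 : ℝ) + ((1 : ℝ≥0∞) / 2) • Measure.dirac (-1 : ℝ)

lemma ae_abs_le_one_rademacher : ∀ᵐ x ∂rademacher, |x| ≤ 1 := by
  simp [rademacher]

lemma integral_id_rademacher : ∫ x, x ∂rademacher = 0 := by
  rw [rademacher, integral_add_measure, integral_smul_measure, integral_smul_measure,
    integral_dirac, integral_dirac]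
  · norm_num
  all_goals exact (integrable_dirac (by simp)).smul_measure (by simp)

lemma hasSubgaussianMGF_mul_of_map_eq_rademacher [IsProbabilityMeasure P] {ε W : Ω → ℝ} {B : ℝ}
    (hε : Measurable ε) (hW : Measurable W) (hεW : IndepFun ε W P)
    (hlaw : P.map ε = rademacher) (hWB : ∀ᵐ ω ∂P, |W ω| ≤ B) :
    HasSubgaussianMGF (fun ω ↦ ε ω * W ω) ⟨B ^ 2, sq_nonneg B⟩ P := by
  have hε_le : ∀ᵐ ω ∂P, |ε ω| ≤ 1 :=
    ae_of_ae_map hε.aemeasurable (hlaw ▸ ae_abs_le_one_rademacher)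
  have hε_mean : ∫ ω, ε ω ∂P = 0 := by
    rw [← integral_id_rademacher, ← hlaw]
    exact (integral_map hε.aemeasurable aestronglyMeasurable_id).symm
  have hmem : ∀ᵐ ω ∂P, ε ω * W ω ∈ Set.Icc (-B) B := by
    filter_upwards [hε_le, hWB] with ω h1 h2
    rw [Set.mem_Icc, ← abs_le, abs_mul]
    nlinarith [abs_nonneg (ε ω), abs_nonneg (W ω)]
  have hmean : P[fun ω ↦ ε ω * W ω] = 0 := by
    rw [hεW.integral_fun_mul_eq_mul_integral hε.aestronglyMeasurable hW.aestronglyMeasurable,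
      hε_mean, zero_mul]
  have hparam : ((‖B - -B‖₊ / 2) ^ 2 : ℝ≥0) = ⟨B ^ 2, sq_nonneg B⟩ := by
    ext
    simp [← two_mul, sq_abs]
    rfl
  exact hparam ▸
    hasSubgaussianMGF_of_mem_Icc_of_integral_eq_zero (hε.mul hW).aemeasurable hmem hmean

lemma hasSubgaussianMGF_sum_rademacher_mul [IsProbabilityMeasure P] {ι : Type*} [Fintype ι]
    {σ w : ι → Ω → ℝ} {B : ℝ} (hσm : ∀ i, Measurable (σ i)) (hwm : ∀ i, Measurable (w i))
    (hindep : iIndepFun (Sum.elim σ w) P) (hσ : ∀ i, P.map (σ i) = rademacher)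
    (hw : ∀ i, ∀ᵐ ω ∂P, |w i ω| ≤ B) (x : ι → ℝ) :
    HasSubgaussianMGF (fun ω ↦ ∑ i, σ i ω * x i * w i ω)
      ⟨(∑ i, x i ^ 2) * B ^ 2, by positivity⟩ P := by
  have hterms : iIndepFun (fun i ω ↦ x i * (σ i ω * w i ω)) P :=
    (hindep.prodMk_of_sumElim hσm hwm).comp (fun i p ↦ x i * (p.1 * p.2)) fun _ ↦ by fun_prop
  have hsub (i : ι) : HasSubgaussianMGF (fun ω ↦ x i * (σ i ω * w i ω))
      (⟨x i ^ 2, sq_nonneg _⟩ * ⟨B ^ 2, sq_nonneg B⟩) P :=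
    (hasSubgaussianMGF_mul_of_map_eq_rademacher (hσm i) (hwm i)
      (hindep.indepFun Sum.inl_ne_inr) (hσ i) (hw i)).const_mul (x i)
  refine ((HasSubgaussianMGF.sum_of_iIndepFun hterms (s := univ) fun i _ ↦ hsub i).mono
    (le_of_eq ?_)).congr (ae_of_all _ fun ω ↦ ?_)
  · ext
    rw [NNReal.coe_sum]
    exact (sum_mul _ _ _).symm
  · simp only [mul_comm, mul_left_comm]

theorem integral_sup'_le_of_hasSubgaussianMGF [IsProbabilityMeasure P] {ι : Type*}
    {s : Finset ι} (hs : s.Nonempty) {Y : ι → Ω → ℝ} {c : ℝ≥0}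
    (hY : ∀ i ∈ s, HasSubgaussianMGF (Y i) c P) :
    ∫ ω, s.sup' hs (Y · ω) ∂P ≤ √(2 * Real.log #s * c) := by
  set M : Ω → ℝ := fun ω ↦ s.sup' hs (Y · ω)
  have hM : Integrable M P := by
    have : Integrable (s.sup' hs Y) P :=
      Finset.sup'_induction (p := (Integrable · P)) hs Y (fun f hf g hg ↦ hf.sup hg)
        fun i hi ↦ (hY i hi).integrable
    convert this using 1
    ext ω
    exact (Finset.sup'_apply hs Y ω).symm
  have hexp_le (t : ℝ) (ω : Ω) : Real.exp (t * M ω) ≤ ∑ i ∈ s, Real.exp (t * Y i ω) := by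
    obtain ⟨i, hi, hMi⟩ := s.exists_mem_eq_sup' hs (Y · ω)
    rw [show M ω = Y i ω from hMi]
    exact single_le_sum (f := fun j ↦ Real.exp (t * Y j ω)) (fun j _ ↦ (Real.exp_pos _).le) hi
  refine le_sqrt_of_forall_mul_le_add_sq (Real.log_natCast_nonneg _) c.2 fun t ht ↦ ?_
  have hsum : Integrable (fun ω ↦ ∑ i ∈ s, Real.exp (t * Y i ω)) P :=
    integrable_finsetSum _ fun i hi ↦ (hY i hi).integrable_exp_mul t
  have hexpM : Integrable (fun ω ↦ Real.exp (t * M ω)) P :=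
    hsum.mono' (by fun_prop) (ae_of_all _ fun ω ↦ by
      simpa [Real.norm_eq_abs, abs_of_pos (Real.exp_pos _)] using hexp_le t ω)
  have hcard : (0 : ℝ) < #s := by exact_mod_cast hs.card_pos
  have key : Real.exp (t * ∫ ω, M ω ∂P) ≤ #s * Real.exp (c * t ^ 2 / 2) :=
    calc Real.exp (t * ∫ ω, M ω ∂P) = Real.exp (∫ ω, t * M ω ∂P) := by rw [integral_const_mul]
      _ ≤ ∫ ω, Real.exp (t * M ω) ∂P :=
        convexOn_exp.map_integral_le Real.continuous_exp.continuousOn isClosed_univ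
          (ae_of_all _ fun _ ↦ Set.mem_univ _) (hM.const_mul t) hexpM
      _ ≤ ∫ ω, ∑ i ∈ s, Real.exp (t * Y i ω) ∂P := integral_mono hexpM hsum (hexp_le t)
      _ = ∑ i ∈ s, mgf (Y i) P t :=
        integral_finsetSum _ fun i hi ↦ (hY i hi).integrable_exp_mul t
      _ ≤ ∑ i ∈ s, Real.exp (c * t ^ 2 / 2) := sum_le_sum fun i hi ↦ (hY i hi).mgf_le t
      _ = #s * Real.exp (c * t ^ 2 / 2) := by rw [sum_const, nsmul_eq_mul]
  have := Real.log_le_log (Real.exp_pos _) key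
  rw [Real.log_exp, Real.log_mul hcard.ne' (Real.exp_pos _).ne', Real.log_exp] at this
  linarith

end ProbabilityTheory

theorem weighted_massart_general {n : ℕ} (B : ℝ) (hB : 0 < B)
    (J : Finset (Fin n → ℝ)) (hJ : J.Nonempty)
    (r : ℝ) (hr : r = J.sup' hJ fun x => Real.sqrt (x ⬝ᵥ x))
    {Ω : Type*} [MeasurableSpace Ω] (P : Measure Ω) [IsProbabilityMeasure P]
    (σ w : Fin n → Ω → ℝ)
    (hσm : ∀ i, Measurable (σ i)) (hwm : ∀ i, Measurable (w i))
    (hindep : iIndepFun (Sum.elim σ w) P)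
    (hσ : ∀ i, P.map (σ i) =
      ((1 : ℝ≥0∞) / 2) • Measure.dirac (1 : ℝ) + ((1 : ℝ≥0∞) / 2) • Measure.dirac (-1 : ℝ))
    (hw : ∀ i, ∀ᵐ ω ∂P, |w i ω| ≤ B) :
    ∫ ω, (J.sup' hJ fun x => ∑ i, σ i ω * x i * w i ω) ∂P
      ≤ r * B * Real.sqrt (2 * Real.log J.card) := by
  have hr_nonneg : 0 ≤ r :=
    hr ▸ (Real.sqrt_nonneg _).trans (J.le_sup' (fun x ↦ √(x ⬝ᵥ x)) hJ.choose_spec)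
  have hnorm {x : Fin n → ℝ} (hx : x ∈ J) : ∑ i, x i ^ 2 ≤ r ^ 2 :=
    calc ∑ i, x i ^ 2 = x ⬝ᵥ x := by simp only [dotProduct, sq]
      _ = √(x ⬝ᵥ x) ^ 2 := (Real.sq_sqrt (sum_nonneg fun i _ ↦ mul_self_nonneg (x i))).symm
      _ ≤ r ^ 2 := by gcongr; exact hr ▸ J.le_sup' (fun x ↦ √(x ⬝ᵥ x)) hx
  have hsub : ∀ x ∈ J, HasSubgaussianMGF (fun ω ↦ ∑ i, σ i ω * x i * w i ω)
      ⟨r ^ 2 * B ^ 2, by positivity⟩ P := fun x hx ↦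
    (hasSubgaussianMGF_sum_rademacher_mul hσm hwm hindep hσ hw x).mono <| by
      change (∑ i, x i ^ 2) * B ^ 2 ≤ r ^ 2 * B ^ 2
      gcongr
      exact hnorm hx
  calc ∫ ω, (J.sup' hJ fun x => ∑ i, σ i ω * x i * w i ω) ∂P
      ≤ √(2 * Real.log #J * (r ^ 2 * B ^ 2)) := integral_sup'_le_of_hasSubgaussianMGF hJ hsub
    _ = r * B * √(2 * Real.log #J) := by
      rw [show 2 * Real.log #J * (r ^ 2 * B ^ 2) = (r * B) ^ 2 * (2 * Real.log #J) by ring,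
        Real.sqrt_mul (sq_nonneg _), Real.sqrt_sq (by positivity)]

/-- **Weighted Massart finite-class lemma.**  Let `J ⊆ ℝ^n` be a finite nonempty set with
`r = max_{x ∈ J} ‖x‖`.  Let `σ_1, …, σ_n, w_1, …, w_n` be mutually independent random
variables, the `σ_i` Rademacher (uniform on `{−1, 1}`) and the `w_i` taking values in
`[−B, B]` almost surely.  Then
`E[max_{x ∈ J} ∑ i, σ_i x_i w_i] ≤ r B √(2 log |J|)`. -/
theorem weighted_massart {n : ℕ} (hn : 1 ≤ n) (B : ℝ) (hB : 0 < B)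
    (J : Finset (Fin n → ℝ)) (hJ : J.Nonempty)
    (r : ℝ) (hr : r = J.sup' hJ fun x => Real.sqrt (x ⬝ᵥ x))
    {Ω : Type*} [MeasurableSpace Ω] (P : Measure Ω) [IsProbabilityMeasure P]
    (σ w : Fin n → Ω → ℝ)
    (hσm : ∀ i, Measurable (σ i)) (hwm : ∀ i, Measurable (w i))
    (hindep : iIndepFun (Sum.elim σ w) P)
    (hσ : ∀ i, P.map (σ i) =
      ((1 : ℝ≥0∞) / 2) • Measure.dirac (1 : ℝ) + ((1 : ℝ≥0∞) / 2) • Measure.dirac (-1 : ℝ))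
    (hw : ∀ i, ∀ᵐ ω ∂P, |w i ω| ≤ B) :
    ∫ ω, (J.sup' hJ fun x => ∑ i, σ i ω * x i * w i ω) ∂P
      ≤ r * B * Real.sqrt (2 * Real.log J.card) :=
  weighted_massart_general B hB J hJ r hr P σ w hσm hwm hindep hσ hw
end

section
/- Let H ≥ 1 be an integer, let X_1, …, X_H be measurable spaces, and let 𝒜 be a finite set of actions. For each h ∈ {1,…,H−1} let P_h be a Markov kernel from X_h × 𝒜 to X_{h+1}. For each h let K_h ⊆ X_h be measurable, let π'_h, π̂_h : X_h → 𝒜 be measurable, and define π̂'_h : X_h → 𝒜 by π̂'_h(x) = π̂_h(x) if x ∈ K_h and π̂'_h(x) = π'_h(x) otherwise. Let r̃_h : X_h × 𝒜 → ℝ be bounded measurable, and define V_h : X_h → ℝ by the backward recursion V_H(x) = r̃_H(x, π̂'_H(x)) and, for h < H, V_h(x) = r̃_h(x, π̂'_h(x)) + ∫_{X_{h+1}} V_{h+1}(y) dP_h((x, π̂'_h(x)))(y). For h ≤ ℓ ≤ H, x ∈ X_h, and a bounded measurable function g of (x_h, a_h, x_{h+1}, a_{h+1}, …, x_ℓ,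 a_ℓ), write E^{π̂}[ g | x_h = x, a_h = a ] for the iterated integral in which a_h = a, x_{k+1} ∼ P_k(x_k, a_k) for h ≤ k < ℓ, and a_k = π̂_k(x_k) for h < k ≤ ℓ. Then for every h ∈ {1,…,H} and every x ∈ X_h, with a = π̂'_h(x): V_h(x) = Σ_{ℓ=h}^{H} E^{π̂}[ 1{x_ℓ ∉ K_ℓ} · ∏_{k=h}^{ℓ−1} 1{x_k ∈ K_k} · V_ℓ(x_ℓ) | x_h = x, a_h = a ] + Σ_{ℓ=h}^{H} E^{π̂}[ ∏_{k=h}^{ℓ} 1{x_k ∈ K_k} · r̃_ℓ(x_ℓ, a_ℓ) | x_h = x, a_h = a ], with the convention that the empty product ∏_{k=h}^{h−1} 1{x_k ∈ K_k} equals 1. -/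
open MeasureTheory ProbabilityTheory

attribute [local instance] Classical.propDecidable

/-- Iterated rollout expectation with indicator "skipping":
`skipE P π K m ℓ g x` is the iterated integral
`E^π[ (∏_{k=m}^{ℓ-1} 1{x_k ∈ K_k}) · g(x_ℓ) | x_m = x ]`, where at each layer
`m ≤ k < ℓ` the action `a_k = π_k(x_k)` is taken and `x_{k+1} ∼ P_k(x_k, a_k)`. -/
noncomputable def skipE {X : ℕ → Type*} [∀ h, MeasurableSpace (X h)]
    {A : Type*} [MeasurableSpace A]
    (P : ∀ h : ℕ, Kernel (X h × A) (X (h + 1))) (π : ∀ h, X h → A)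
    (K : ∀ h, Set (X h)) : (m ℓ : ℕ) → (X ℓ → ℝ) → X m → ℝ
  | m, ℓ, g =>
    if hml : m < ℓ then
      fun x => (if x ∈ K m then (1 : ℝ) else 0) *
        ∫ y, skipE P π K (m + 1) ℓ g y ∂(P m (x, π m x))
    else if hml' : m = ℓ then fun x => g (hml' ▸ x) else fun _ => 0
  termination_by m ℓ _ => ℓ - m
  decreasing_by omega

section Aux
variable {X : ℕ → Type*} [∀ h, MeasurableSpace (X h)]
    {A : Type*} [MeasurableSpace A]
    (P : ∀ h : ℕ, Kernel (X h × A) (X (h + 1))) (π : ∀ h, X h → A)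
    (K : ∀ h, Set (X h))

lemma skipE_self (m : ℕ) (g : X m → ℝ) : skipE P π K m m g = g := by
  rw [skipE]; simp

lemma skipE_lt {m ℓ : ℕ} (h : m < ℓ) (g : X ℓ → ℝ) (x : X m) :
    skipE P π K m ℓ g x = (if x ∈ K m then (1:ℝ) else 0) *
      ∫ y, skipE P π K (m+1) ℓ g y ∂(P m (x, π m x)) := by
  rw [skipE]; simp [h]

lemma skipE_gt {m ℓ : ℕ} (h : ℓ < m) (g : X ℓ → ℝ) :
    skipE P π K m ℓ g = fun _ => 0 := by
  rw [skipE, dif_neg (by omega), dif_neg (by omega)]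

lemma kernel_integral_meas {m : ℕ} [IsSFiniteKernel (P m)] (hπ : Measurable (π m))
    {F : X (m+1) → ℝ} (hF : Measurable F) :
    Measurable fun x : X m => ∫ y, F y ∂(P m (x, π m x)) := by
  have hc : Measurable fun x : X m => (x, π m x) := measurable_id.prodMk hπ
  have : (fun x : X m => ∫ y, F y ∂(P m (x, π m x)))
      = fun x : X m => ∫ y, F y ∂(((P m).comap (fun x : X m => (x, π m x)) hc) x) := by
    funext x; rw [Kernel.comap_apply]
  rw [this]
  exact (StronglyMeasurable.integral_kernel_prod_right'
    (κ := (P m).comap (fun x : X m => (x, π m x)) hc)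
    ((hF.comp measurable_snd).stronglyMeasurable)).measurable

lemma skipE_meas [∀ h, IsMarkovKernel (P h)] (hπ : ∀ k, Measurable (π k))
    (hK : ∀ k, MeasurableSet (K k)) :
    ∀ n m ℓ : ℕ, ℓ - m ≤ n → ∀ g : X ℓ → ℝ, Measurable g →
      Measurable (skipE P π K m ℓ g) := by
  intro n
  induction n with
  | zero =>
    intro m ℓ hn g hg
    rcases lt_trichotomy m ℓ with h | h | h
    · omega
    · subst h; rw [skipE_self]; exact hg
    · rw [skipE_gt _ _ _ h]; exact measurable_const
  | succ n ih =>
    intro m ℓ hn g hg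
    rcases lt_trichotomy m ℓ with h | h | h
    · have heq : skipE P π K m ℓ g = fun x => (if x ∈ K m then (1:ℝ) else 0) *
          ∫ y, skipE P π K (m+1) ℓ g y ∂(P m (x, π m x)) := by
        funext x; exact skipE_lt _ _ _ h _ _
      rw [heq]
      exact (Measurable.ite (hK m) measurable_const measurable_const).mul
        (kernel_integral_meas _ _ (hπ m) (ih (m+1) ℓ (by omega) g hg))
    · subst h; rw [skipE_self]; exact hg
    · rw [skipE_gt _ _ _ h]; exact measurable_const

lemma skipE_bound [∀ h, IsMarkovKernel (P h)] {C : ℝ} (hC : 0 ≤ C) :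
    ∀ n m ℓ : ℕ, ℓ - m ≤ n → ∀ g : X ℓ → ℝ, (∀ z, |g z| ≤ C) →
      ∀ x, |skipE P π K m ℓ g x| ≤ C := by
  intro n
  induction n with
  | zero =>
    intro m ℓ hn g hg x
    rcases lt_trichotomy m ℓ with h | h | h
    · omega
    · subst h; rw [skipE_self]; exact hg x
    · rw [skipE_gt _ _ _ h]; simpa using hC
  | succ n ih =>
    intro m ℓ hn g hg x
    rcases lt_trichotomy m ℓ with h | h | h
    · rw [skipE_lt _ _ _ h]
      by_cases hx : x ∈ K m
      · rw [if_pos hx, one_mul]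
        have hb : ∀ y, ‖skipE P π K (m+1) ℓ g y‖ ≤ C := fun y => by
          simpa [Real.norm_eq_abs] using ih (m+1) ℓ (by omega) g hg y
        have := norm_integral_le_of_norm_le_const (μ := P m (x, π m x))
          (Filter.Eventually.of_forall hb)
        simpa [Real.norm_eq_abs] using this
      · rw [if_neg hx, zero_mul]; simpa using hC
    · subst h; rw [skipE_self]; exact hg x
    · rw [skipE_gt _ _ _ h]; simpa using hC

end Aux
/-- **Skip-step value decomposition.**  In a layered controlled Markov chain with Markov
kernels `P_h` and finite action set `A`, let `π̂'_h` follow `π̂_h` on `K_h` and `π'_h` off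
`K_h`, let `r̃_h` be bounded measurable rewards, and let `V_h` be the value function of
`π̂'` for the rewards `r̃`, defined by the backward recursion
`V_H(x) = r̃_H(x, π̂'_H(x))` and
`V_h(x) = r̃_h(x, π̂'_h(x)) + ∫ V_{h+1} dP_h(x, π̂'_h(x))` for `h < H`.  Then for every
`1 ≤ h ≤ H` and `x ∈ X_h`, with `a = π̂'_h(x)`,
`V_h(x) = ∑_{ℓ=h}^{H} E^{π̂}[1{x_ℓ ∉ K_ℓ} ∏_{k=h}^{ℓ-1} 1{x_k ∈ K_k} · V_ℓ(x_ℓ) | x_h = x, a_h = a]`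
`       + ∑_{ℓ=h}^{H} E^{π̂}[∏_{k=h}^{ℓ} 1{x_k ∈ K_k} · r̃_ℓ(x_ℓ, a_ℓ) | x_h = x, a_h = a]`,
where the conditional expectations are the iterated integrals in which `a_h = a`,
`x_{k+1} ∼ P_k(x_k, a_k)`, and `a_k = π̂_k(x_k)` for `h < k ≤ ℓ`. -/
theorem skip_step_value_decomposition {X : ℕ → Type*} [∀ h, MeasurableSpace (X h)]
    {A : Type*} [Fintype A] [Nonempty A] [MeasurableSpace A] [MeasurableSingletonClass A]
    (H : ℕ) (hH : 1 ≤ H)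
    (P : ∀ h : ℕ, Kernel (X h × A) (X (h + 1))) [∀ h, IsMarkovKernel (P h)]
    (K : ∀ h, Set (X h)) (hK : ∀ h, MeasurableSet (K h))
    (π' πhat : ∀ h, X h → A)
    (hπ'm : ∀ h, Measurable (π' h)) (hπhatm : ∀ h, Measurable (πhat h))
    (πhat' : ∀ h, X h → A)
    (hπhat' : ∀ h x, πhat' h x = if x ∈ K h then πhat h x else π' h x)
    (r : ∀ h, X h → A → ℝ)
    (hrm : ∀ h, Measurable fun p : X h × A => r h p.1 p.2)
    (C : ℝ) (hrb : ∀ h x a, |r h x a| ≤ C)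
    (V : ∀ h, X h → ℝ)
    (hVH : ∀ x, V H x = r H x (πhat' H x))
    (hVrec : ∀ h, h < H → ∀ x : X h,
      V h x = r h x (πhat' h x) + ∫ y, V (h + 1) y ∂(P h (x, πhat' h x))) :
    ∀ h, 1 ≤ h → h ≤ H → ∀ x : X h,
      V h x =
        (∑ ℓ ∈ Finset.Icc h H,
          if h < ℓ then
            (if x ∈ K h then (1 : ℝ) else 0) *
              ∫ y, skipE P πhat K (h + 1) ℓ
                  (fun z => (if z ∈ K ℓ then (0 : ℝ) else 1) * V ℓ z) y
                ∂(P h (x, πhat' h x))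
          else (if x ∈ K h then (0 : ℝ) else 1) * V h x)
        +
        (∑ ℓ ∈ Finset.Icc h H,
          if h < ℓ then
            (if x ∈ K h then (1 : ℝ) else 0) *
              ∫ y, skipE P πhat K (h + 1) ℓ
                  (fun z => (if z ∈ K ℓ then (1 : ℝ) else 0) * r ℓ z (πhat ℓ z)) y
                ∂(P h (x, πhat' h x))
          else (if x ∈ K h then (1 : ℝ) else 0) * r h x (πhat' h x)) := by

  have hπhat'm : ∀ h, Measurable (πhat' h) := by
    intro h
    have he : πhat' h = fun x => if x ∈ K h then πhat h x else π' h x := funext (hπhat' h)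
    rw [he]; exact Measurable.ite (hK h) (hπhatm h) (hπ'm h)
  have hrfm : ∀ h (f : X h → A), Measurable f → Measurable fun x => r h x (f x) :=
    fun h f hf => (hrm h).comp (measurable_id.prodMk hf)
  have hVmeas : ∀ n h, h ≤ H → H - h ≤ n → Measurable (V h) := by
    intro n
    induction n with
    | zero =>
      intro h hh hn
      have hhH : h = H := by omega
      subst hhH
      have he : V h = fun x => r h x (πhat' h x) := funext hVH
      rw [he]; exact hrfm h _ (hπhat'm h)
    | succ n ih =>
      intro h hh hn
      by_cases hhH : h = H
      · subst hhH
        have he : V h = fun x => r h x (πhat' h x) := funext hVH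
        rw [he]; exact hrfm h _ (hπhat'm h)
      · have hlt : h < H := by omega
        have he : V h = fun x => r h x (πhat' h x) + ∫ y, V (h+1) y ∂(P h (x, πhat' h x)) :=
          funext (hVrec h hlt)
        rw [he]
        exact (hrfm h _ (hπhat'm h)).add
          (kernel_integral_meas P πhat' (hπhat'm h) (ih (h+1) (by omega) (by omega)))
  have hVbound : ∀ n h, h ≤ H → H - h ≤ n → ∀ x, |V h x| ≤ (n+1) * C := by
    intro n
    induction n with
    | zero =>
      intro h hh hn x
      have hhH : h = H := by omega
      subst hhH
      rw [hVH x]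
      simpa using hrb h x (πhat' h x)
    | succ n ih =>
      intro h hh hn x
      have hC0 : 0 ≤ C := (abs_nonneg _).trans (hrb h x (πhat' h x))
      by_cases hhH : h = H
      · subst hhH
        rw [hVH x]
        have h1 := hrb h x (πhat' h x)
        push_cast
        nlinarith [abs_nonneg (r h x (πhat' h x))]
      · have hlt : h < H := by omega
        rw [hVrec h hlt x]
        have hint : |∫ y, V (h+1) y ∂(P h (x, πhat' h x))| ≤ ((n:ℝ)+1)*C := by
          have hb : ∀ y, ‖V (h+1) y‖ ≤ ((n:ℝ)+1)*C := fun y => by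
            simpa [Real.norm_eq_abs] using ih (h+1) (by omega) (by omega) y
          have hn2 := norm_integral_le_of_norm_le_const (μ := P h (x, πhat' h x))
            (Filter.Eventually.of_forall hb)
          simpa [Real.norm_eq_abs] using hn2
        have habs := abs_add_le (r h x (πhat' h x)) (∫ y, V (h+1) y ∂(P h (x, πhat' h x)))
        have h1 := hrb h x (πhat' h x)
        push_cast
        push_cast at hint
        linarith
  have key : ∀ n m, m ≤ H → H - m ≤ n → ∀ y : X m,
      V m y =
        (∑ ℓ ∈ Finset.Icc m H,
          skipE P πhat K m ℓ (fun z => (if z ∈ K ℓ then (0:ℝ) else 1) * V ℓ z) y)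
        + (∑ ℓ ∈ Finset.Icc m H,
          skipE P πhat K m ℓ (fun z => (if z ∈ K ℓ then (1:ℝ) else 0) * r ℓ z (πhat ℓ z)) y) := by
    have base : ∀ y : X H,
        V H y =
          (∑ ℓ ∈ Finset.Icc H H,
            skipE P πhat K H ℓ (fun z => (if z ∈ K ℓ then (0:ℝ) else 1) * V ℓ z) y)
          + (∑ ℓ ∈ Finset.Icc H H,
            skipE P πhat K H ℓ (fun z => (if z ∈ K ℓ then (1:ℝ) else 0) * r ℓ z (πhat ℓ z)) y) := by
      intro y
      rw [Finset.Icc_self, Finset.sum_singleton, Finset.sum_singleton, skipE_self, skipE_self]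
      by_cases hy : y ∈ K H
      · rw [hVH y, hπhat' H y]; simp [hy]
      · simp [hy]
    intro n
    induction n with
    | zero =>
      intro m hm hn y
      have hmH : m = H := by omega
      subst hmH
      exact base y
    | succ n ih =>
      intro m hm hn y
      by_cases hmH : m = H
      · subst hmH; exact base y
      have hcm : m < H := by omega
      have hins : Finset.Icc m H = insert m (Finset.Icc (m+1) H) := by
        ext k; simp only [Finset.mem_Icc, Finset.mem_insert]; omega
      have hnm : m ∉ Finset.Icc (m+1) H := by simp
      rw [hins, Finset.sum_insert hnm, Finset.sum_insert hnm, skipE_self, skipE_self]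
      have hmem : ∀ ℓ ∈ Finset.Icc (m+1) H, m < ℓ ∧ ℓ ≤ H := by
        intro ℓ hℓ; simp only [Finset.mem_Icc] at hℓ; omega
      by_cases hy : y ∈ K m
      · have hC0 : 0 ≤ C := (abs_nonneg _).trans (hrb m y (πhat m y))
        have hD : (0:ℝ) ≤ ((H:ℝ)+1)*C := by positivity
        have hπq : πhat' m y = πhat m y := by rw [hπhat' m y, if_pos hy]
        have hrwV : ∀ ℓ ∈ Finset.Icc (m+1) H,
            skipE P πhat K m ℓ (fun z => (if z ∈ K ℓ then (0:ℝ) else 1) * V ℓ z) y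
              = ∫ z, skipE P πhat K (m+1) ℓ
                  (fun z => (if z ∈ K ℓ then (0:ℝ) else 1) * V ℓ z) z
                  ∂(P m (y, πhat m y)) := by
          intro ℓ hℓ
          rw [skipE_lt _ _ _ (hmem ℓ hℓ).1, if_pos hy, one_mul]
        have hrwR : ∀ ℓ ∈ Finset.Icc (m+1) H,
            skipE P πhat K m ℓ (fun z => (if z ∈ K ℓ then (1:ℝ) else 0) * r ℓ z (πhat ℓ z)) y
              = ∫ z, skipE P πhat K (m+1) ℓ
                  (fun z => (if z ∈ K ℓ then (1:ℝ) else 0) * r ℓ z (πhat ℓ z)) z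
                  ∂(P m (y, πhat m y)) := by
          intro ℓ hℓ
          rw [skipE_lt _ _ _ (hmem ℓ hℓ).1, if_pos hy, one_mul]
        have hbV : ∀ ℓ, ℓ ≤ H → ∀ z : X ℓ,
            |(if z ∈ K ℓ then (0:ℝ) else 1) * V ℓ z| ≤ ((H:ℝ)+1)*C := by
          intro ℓ hℓ z
          by_cases hz : z ∈ K ℓ
          · simp only [if_pos hz, zero_mul, abs_zero]; exact hD
          · simp only [if_neg hz, one_mul]
            exact hVbound H ℓ hℓ (by omega) z
        have hbR : ∀ ℓ, ℓ ≤ H → ∀ z : X ℓ,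
            |(if z ∈ K ℓ then (1:ℝ) else 0) * r ℓ z (πhat ℓ z)| ≤ ((H:ℝ)+1)*C := by
          intro ℓ hℓ z
          by_cases hz : z ∈ K ℓ
          · simp only [if_pos hz, one_mul]
            have := hrb ℓ z (πhat ℓ z)
            nlinarith [Nat.cast_nonneg (α := ℝ) H]
          · simp only [if_neg hz, zero_mul, abs_zero]; exact hD
        have hmV : ∀ ℓ, ℓ ≤ H →
            Measurable (fun z : X ℓ => (if z ∈ K ℓ then (0:ℝ) else 1) * V ℓ z) := fun ℓ hℓ =>
          (Measurable.ite (hK ℓ) measurable_const measurable_const).mul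
            (hVmeas H ℓ hℓ (by omega))
        have hmR : ∀ ℓ, ℓ ≤ H →
            Measurable (fun z : X ℓ => (if z ∈ K ℓ then (1:ℝ) else 0) * r ℓ z (πhat ℓ z)) :=
          fun ℓ hℓ =>
          (Measurable.ite (hK ℓ) measurable_const measurable_const).mul
            (hrfm ℓ (πhat ℓ) (hπhatm ℓ))
        have hintV : ∀ ℓ ∈ Finset.Icc (m+1) H,
            Integrable (fun z => skipE P πhat K (m+1) ℓ
              (fun z => (if z ∈ K ℓ then (0:ℝ) else 1) * V ℓ z) z) (P m (y, πhat m y)) := by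
          intro ℓ hℓ
          obtain ⟨h1, h2⟩ := hmem ℓ hℓ
          refine ⟨(skipE_meas P πhat K hπhatm hK H (m+1) ℓ (by omega) _
            (hmV ℓ h2)).aestronglyMeasurable, ?_⟩
          exact HasFiniteIntegral.of_bounded (C := ((H:ℝ)+1)*C)
            (Filter.Eventually.of_forall fun z => by
              simpa [Real.norm_eq_abs] using
                skipE_bound P πhat K hD H (m+1) ℓ (by omega) _ (hbV ℓ h2) z)
        have hintR : ∀ ℓ ∈ Finset.Icc (m+1) H,
            Integrable (fun z => skipE P πhat K (m+1) ℓ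
              (fun z => (if z ∈ K ℓ then (1:ℝ) else 0) * r ℓ z (πhat ℓ z)) z)
              (P m (y, πhat m y)) := by
          intro ℓ hℓ
          obtain ⟨h1, h2⟩ := hmem ℓ hℓ
          refine ⟨(skipE_meas P πhat K hπhatm hK H (m+1) ℓ (by omega) _
            (hmR ℓ h2)).aestronglyMeasurable, ?_⟩
          exact HasFiniteIntegral.of_bounded (C := ((H:ℝ)+1)*C)
            (Filter.Eventually.of_forall fun z => by
              simpa [Real.norm_eq_abs] using
                skipE_bound P πhat K hD H (m+1) ℓ (by omega) _ (hbR ℓ h2) z)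
        have hsplit : ∫ z, V (m+1) z ∂(P m (y, πhat m y))
            = ∫ z, ((∑ ℓ ∈ Finset.Icc (m+1) H, skipE P πhat K (m+1) ℓ
                  (fun z => (if z ∈ K ℓ then (0:ℝ) else 1) * V ℓ z) z)
                + (∑ ℓ ∈ Finset.Icc (m+1) H, skipE P πhat K (m+1) ℓ
                  (fun z => (if z ∈ K ℓ then (1:ℝ) else 0) * r ℓ z (πhat ℓ z)) z))
                ∂(P m (y, πhat m y)) :=
          integral_congr_ae (Filter.Eventually.of_forall fun z =>
            ih (m+1) (by omega) (by omega) z)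
        rw [Finset.sum_congr rfl hrwV, Finset.sum_congr rfl hrwR,
          hVrec m hcm y, hπq, hsplit,
          integral_add (integrable_finset_sum _ hintV) (integrable_finset_sum _ hintR),
          integral_finset_sum _ hintV, integral_finset_sum _ hintR]
        simp only [if_pos hy]
        ring
      · have hz0 : ∀ (ℓ : ℕ) (g : X ℓ → ℝ), ℓ ∈ Finset.Icc (m+1) H →
            skipE P πhat K m ℓ g y = 0 := by
          intro ℓ g hℓ
          rw [skipE_lt _ _ _ (hmem ℓ hℓ).1, if_neg hy, zero_mul]
        rw [Finset.sum_congr rfl (fun ℓ hℓ => hz0 ℓ _ hℓ),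
          Finset.sum_congr rfl (fun ℓ hℓ => hz0 ℓ _ hℓ)]
        simp [hy]
  intro h h1 hhH x
  refine (key H h hhH (by omega) x).trans ?_
  congr 1
  · apply Finset.sum_congr rfl
    intro ℓ hℓ
    have hℓ' : h ≤ ℓ ∧ ℓ ≤ H := by simpa [Finset.mem_Icc] using hℓ
    by_cases hlt : h < ℓ
    · rw [if_pos hlt, skipE_lt _ _ _ hlt]
      by_cases hx : x ∈ K h
      · simp [hπhat', hx]
      · simp [hx]
    · have he : ℓ = h := by omega
      subst he
      rw [if_neg hlt, skipE_self]
  · apply Finset.sum_congr rfl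
    intro ℓ hℓ
    have hℓ' : h ≤ ℓ ∧ ℓ ≤ H := by simpa [Finset.mem_Icc] using hℓ
    by_cases hlt : h < ℓ
    · rw [if_pos hlt, skipE_lt _ _ _ hlt]
      by_cases hx : x ∈ K h
      · simp [hπhat', hx]
      · simp [hx]
    · have he : ℓ = h := by omega
      subst he
      rw [if_neg hlt, skipE_self]
      by_cases hx : x ∈ K ℓ
      · simp [hπhat', hx]
      · simp [hx]
end
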